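/- arXiv:1506.07196 — 10 statements merged into one kernel-verified Lean document; each statement's English description precedes it below -/
import Mathlib

section
/- Let q ≥ 2, and let C be a code of length n over an alphabet Q of size q such that every coordinate i ∈ [n] has t pairwise disjoint recovering sets, each of size exactly r. Then |C| ≤ q^{n/∏_{j=1}^{t}(1+1/(jr))}; in particular, if |C| = q^k then the rate satisfies k/n ≤ 1/∏_{j=1}^{t}(1+1/(jr)). -/
/-
Order the coordinates by a permutation `σ` and call a coordinate determined if one of its
recovering sets lies entirely before it. Two distinct codewords first differ at an undetermined
coordinate, so `|C| ≤ q ^ #undetermined`. For a uniformly random `σ`, a given element is the last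
of a given `s`-set with probability `1 / s`, so by inclusion–exclusion over the `t` disjoint
`r`-sets a coordinate is undetermined with probability
`∑ₛ (-1)ˢ (t choose s) / (s r + 1) = ∏_{j=1}^{t} j r / (j r + 1) = 1 / ∏_{j=1}^{t} (1 + 1 / (j r))`.
Some `σ` therefore leaves at most `n / ∏_{j=1}^{t} (1 + 1 / (j r))` coordinates undetermined.
-/

open Finset Equiv Function

lemma sum_choose_mul_neg_one_pow_div (t : ℕ) {x c : ℝ} (hx : 0 ≤ x) (hc : 0 < c) :
    ∑ s ∈ range (t + 1), (t.choose s : ℝ) * ((-1) ^ s / (s * x + c)) =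
      t.factorial * x ^ t / ∏ m ∈ range (t + 1), (m * x + c) := by
  induction t generalizing c with
  | zero => simp
  | succ t ih =>
    have hpos (m : ℕ) : 0 < (m : ℝ) * x + c := by positivity
    have hshift : ∏ m ∈ range (t + 1), ((m : ℝ) * x + (c + x)) =
        (∏ m ∈ range (t + 1), ((m : ℝ) * x + c)) * ((t + 1 : ℕ) * x + c) / c := by
      rw [eq_div_iff hc.ne', ← prod_range_succ (fun m : ℕ => (m : ℝ) * x + c),
        prod_range_succ' (fun m : ℕ => (m : ℝ) * x + c)]
      push_cast
      simp only [zero_mul, zero_add]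
      exact congrArg (· * c) (prod_congr rfl fun m _ => by ring)
    -- Pascal's rule turns the sum for `t + 1` into the sum for `t` at `c` minus the one at `c + x`
    have hsplit : ∑ s ∈ range (t + 1), (t.choose s : ℝ) * ((-1) ^ (s + 1) / ((s + 1 : ℕ) * x + c))
        = -∑ s ∈ range (t + 1), (t.choose s : ℝ) * ((-1) ^ s / (s * x + (c + x))) := by
      rw [← sum_neg_distrib]
      exact sum_congr rfl fun s _ => by push_cast; ring
    rw [sum_choose_succ_mul (fun s _ => (-1 : ℝ) ^ s / (s * x + c)) t, hsplit, ih hc,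
      ih (by positivity), hshift, prod_range_succ _ (t + 1), Nat.factorial_succ]
    have hP : ∏ m ∈ range (t + 1), ((m : ℝ) * x + c) ≠ 0 :=
      prod_ne_zero_iff.2 fun m _ => (hpos m).ne'
    have hlast := (hpos (t + 1)).ne'
    generalize ∏ m ∈ range (t + 1), ((m : ℝ) * x + c) = P at hP ⊢
    field_simp
    push_cast
    ring

lemma sum_choose_mul_neg_one_pow_div_mul_add_one (t : ℕ) {x : ℝ} (hx : 0 ≤ x) :
    ∑ s ∈ range (t + 1), (t.choose s : ℝ) * ((-1) ^ s / (s * x + 1)) =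
      ∏ j ∈ Icc 1 t, j * x / (j * x + 1) := by
  rw [sum_choose_mul_neg_one_pow_div t hx one_pos]
  induction t with
  | zero => simp
  | succ t ih =>
    rw [prod_Icc_succ_top (by omega), ← ih, prod_range_succ, Nat.factorial_succ]
    have hP : ∏ m ∈ range (t + 1), ((m : ℝ) * x + 1) ≠ 0 :=
      prod_ne_zero_iff.2 fun m _ => by positivity
    have hlast : ((t + 1 : ℕ) : ℝ) * x + 1 ≠ 0 := by positivity
    generalize ∏ m ∈ range (t + 1), ((m : ℝ) * x + 1) = P at hP ⊢
    field_simp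
    push_cast
    ring

section Orderings

variable {α : Type*} [LinearOrder α]

lemma forall_erase_lt_mul_swap {S : Finset α} {a b : α} (ha : a ∈ S) (hb : b ∈ S)
    {σ : Perm α} (hσ : ∀ x ∈ S.erase a, σ x < σ a) :
    ∀ x ∈ S.erase b, (σ * swap a b) x < (σ * swap a b) b := by
  intro x hx
  obtain ⟨hxb, hxS⟩ := mem_erase.1 hx
  rw [Perm.mul_apply, Perm.mul_apply, swap_apply_right]
  refine hσ _ (mem_erase.2 ⟨fun h => hxb ?_, ?_⟩)
  · simpa using congrArg (swap a b) h
  · rcases eq_or_ne x a with rfl | hxa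
    · rwa [swap_apply_left]
    · rwa [swap_apply_of_ne_of_ne hxa hxb]

variable [Fintype α]

lemma card_filter_forall_erase_lt_eq {S : Finset α} {a b : α} (ha : a ∈ S) (hb : b ∈ S) :
    #{σ : Perm α | ∀ x ∈ S.erase a, σ x < σ a} = #{σ : Perm α | ∀ x ∈ S.erase b, σ x < σ b} :=
  card_nbij' (· * swap a b) (· * swap a b)
    (fun σ hσ => by simpa using forall_erase_lt_mul_swap ha hb (by simpa using hσ))
    (fun σ hσ => by
      simpa [swap_comm a b] using forall_erase_lt_mul_swap hb ha (by simpa using hσ))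
    (fun σ _ => by simp [mul_assoc]) (fun σ _ => by simp [mul_assoc])

lemma card_mul_card_filter_forall_erase_lt {S : Finset α} {a : α} (ha : a ∈ S) :
    #S * #{σ : Perm α | ∀ x ∈ S.erase a, σ x < σ a} = (Fintype.card α).factorial := by
  set last : α → Finset (Perm α) := fun b => {σ | ∀ x ∈ S.erase b, σ x < σ b}
  have hcover : S.biUnion last = univ := by
    refine eq_univ_of_forall fun σ => ?_
    obtain ⟨b, hb, hmax⟩ := S.exists_max_image σ ⟨a, ha⟩
    refine mem_biUnion.2 ⟨b, hb, mem_filter.2 ⟨mem_univ _, fun x hx => ?_⟩⟩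
    exact (hmax x (mem_of_mem_erase hx)).lt_of_ne (σ.injective.ne (ne_of_mem_erase hx))
  have hdisj : (S : Set α).PairwiseDisjoint last := by
    intro b hb c hc hbc
    refine disjoint_filter.2 fun σ _ hσb hσc => ?_
    exact (hσb c (mem_erase.2 ⟨hbc.symm, hc⟩)).not_gt (hσc b (mem_erase.2 ⟨hbc, hb⟩))
  calc #S * #(last a) = ∑ b ∈ S, #(last b) := by
        rw [sum_congr rfl fun b hb => card_filter_forall_erase_lt_eq hb ha, sum_const, smul_eq_mul]
    _ = #(S.biUnion last) := (card_biUnion hdisj).symm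
    _ = (Fintype.card α).factorial := by rw [hcover, card_univ, Fintype.card_perm]

lemma card_filter_forall_lt {T : Finset α} {a : α} (ha : a ∉ T) :
    (#{σ : Perm α | ∀ x ∈ T, σ x < σ a} : ℝ) = (Fintype.card α).factorial / (#T + 1) := by
  have h := card_mul_card_filter_forall_erase_lt (mem_insert_self a T)
  rw [erase_insert ha, card_insert_of_notMem ha] at h
  rw [eq_div_iff (by positivity), ← h]
  push_cast
  ring

variable {κ : Type*} [Fintype κ]

lemma card_filter_not_exists_forall_lt (R : κ → Finset α) {a : α} {r : ℕ} (ha : ∀ m, a ∉ R m)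
    (hcard : ∀ m, #(R m) = r) (hdisj : Pairwise (Disjoint on R)) :
    (#{σ : Perm α | ¬ ∃ m, ∀ x ∈ R m, σ x < σ a} : ℝ) =
      (Fintype.card α).factorial * ∏ j ∈ Icc 1 (Fintype.card κ), (j : ℝ) * r / (j * r + 1) := by
  set below : κ → Finset (Perm α) := fun m => {σ | ∀ x ∈ R m, σ x < σ a}
  have hinf (T : Finset κ) :
      (#(T.inf below) : ℝ) = (Fintype.card α).factorial / (#T * r + 1) := by
    have haT : a ∉ T.biUnion R := by simp [ha]
    have hT : #(T.biUnion R) = #T * r := by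
      rw [card_biUnion fun m _ m' _ h => hdisj h, sum_congr rfl fun m _ => hcard m, sum_const,
        smul_eq_mul]
    have hbelow : T.inf below = ({σ : Perm α | ∀ x ∈ T.biUnion R, σ x < σ a} : Finset _) := by
      ext σ
      simp only [below, mem_inf, mem_filter, mem_univ, true_and, mem_biUnion, forall_exists_index,
        and_imp]
      exact ⟨fun h x m hm hx => h m hm x hx, fun h m hm x hx => h x m hm hx⟩
    rw [hbelow, card_filter_forall_lt haT, hT, Nat.cast_mul]
  have hcompl : ({σ : Perm α | ¬ ∃ m, ∀ x ∈ R m, σ x < σ a} : Finset (Perm α)) =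
      univ.inf fun m => (below m)ᶜ := by
    ext σ
    simp [below, mem_inf]
  have hincl := congrArg (Int.cast : ℤ → ℝ) (inclusion_exclusion_card_inf_compl univ below)
  push_cast at hincl
  rw [hcompl, hincl, sum_congr rfl fun T _ => by rw [hinf T],
    ← sum_choose_mul_neg_one_pow_div_mul_add_one _ (Nat.cast_nonneg r), mul_sum,
    sum_powerset_apply_card (fun s => (-1 : ℝ) ^ s * ((Fintype.card α).factorial / (s * r + 1)))]
  simp only [card_univ, nsmul_eq_mul]
  exact sum_congr rfl fun s _ => by ring

lemma exists_perm_card_filter_not_exists_forall_lt_le (R : α → κ → Finset α) {r : ℕ}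
    (hR : ∀ a m, a ∉ R a m) (hcard : ∀ a m, #(R a m) = r)
    (hdisj : ∀ a, Pairwise (Disjoint on R a)) :
    ∃ σ : Perm α, (#{a | ¬ ∃ m, ∀ x ∈ R a m, σ x < σ a} : ℝ) ≤
      Fintype.card α * ∏ j ∈ Icc 1 (Fintype.card κ), (j : ℝ) * r / (j * r + 1) := by
  set G := ∏ j ∈ Icc 1 (Fintype.card κ), (j : ℝ) * r / (j * r + 1)
  have hdouble : ∑ σ : Perm α, (#{a | ¬ ∃ m, ∀ x ∈ R a m, σ x < σ a} : ℝ) =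
      ∑ a : α, (#{σ : Perm α | ¬ ∃ m, ∀ x ∈ R a m, σ x < σ a} : ℝ) := by
    exact_mod_cast sum_card_bipartiteAbove_eq_sum_card_bipartiteBelow (s := univ) (t := univ) _
  have hsum : ∑ σ : Perm α, (#{a | ¬ ∃ m, ∀ x ∈ R a m, σ x < σ a} : ℝ) =
      ∑ _σ : Perm α, (Fintype.card α * G) := by
    rw [hdouble, sum_congr rfl fun a _ =>
      card_filter_not_exists_forall_lt (R a) (hR a) (hcard a) (hdisj a)]
    simp only [sum_const, card_univ, Fintype.card_perm, nsmul_eq_mul]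
    ring
  obtain ⟨σ, -, hσ⟩ := exists_le_of_sum_le univ_nonempty hsum.le
  exact ⟨σ, hσ⟩

end Orderings

def IsRecoveringSet {ι Q : Type*} (C : Finset (ι → Q)) (i : ι) (R : Finset ι) : Prop :=
  ∀ x ∈ C, ∀ y ∈ C, (∀ m ∈ R, x m = y m) → x i = y i

lemma card_le_pow_card_filter_not {ι Q β : Type*} [Fintype ι] [Fintype Q] [LinearOrder β]
    {C : Finset (ι → Q)} (rank : ι → β) {p : ι → Prop} [DecidablePred p]
    (hp : ∀ i, p i → ∃ R, IsRecoveringSet C i R ∧ ∀ x ∈ R, rank x < rank i) :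
    #C ≤ Fintype.card Q ^ #{i | ¬ p i} := by
  classical
  have hinj : Set.InjOn (fun x (i : {i // ¬ p i}) => x i) (C : Set (ι → Q)) := by
    -- distinct codewords differ first, in rank, at a coordinate outside `p`
    intro x hx y hy hxy
    by_contra hne
    obtain ⟨j, hj, hmin⟩ := exists_min_image {i | x i ≠ y i} rank <| by
      obtain ⟨i, hi⟩ := Function.ne_iff.1 hne
      exact ⟨i, mem_filter.2 ⟨mem_univ i, hi⟩⟩
    refine (mem_filter.1 hj).2 ?_
    by_cases hpj : p j
    · obtain ⟨R, hR, hlt⟩ := hp j hpj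
      refine hR x hx y hy fun m hm => ?_
      by_contra h
      exact (hlt m hm).not_ge (hmin m (mem_filter.2 ⟨mem_univ m, h⟩))
    · exact congrFun hxy ⟨j, hpj⟩
  calc #C = #(C.image fun x (i : {i // ¬ p i}) => x i) := (card_image_of_injOn hinj).symm
    _ ≤ Fintype.card ({i // ¬ p i} → Q) := card_le_univ _
    _ = Fintype.card Q ^ #{i | ¬ p i} := by rw [Fintype.card_fun, Fintype.card_subtype]

lemma prod_inv_one_add_inv {t : ℕ} {r : ℝ} (hr : 0 < r) :
    ∏ j ∈ Icc 1 t, (j : ℝ) * r / (j * r + 1) = (∏ j ∈ Icc 1 t, (1 + 1 / ((j : ℝ) * r)))⁻¹ := by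
  rw [← prod_inv_distrib]
  refine prod_congr rfl fun j hj => ?_
  have hj0 : (0 : ℝ) < j := by exact_mod_cast (mem_Icc.1 hj).1
  field_simp

theorem card_le_rpow_of_disjoint_recoveringSets {α κ Q : Type*} [Fintype α] [LinearOrder α]
    [Fintype κ] [Fintype Q] [Nonempty Q] (C : Finset (α → Q)) (R : α → κ → Finset α) {r : ℕ}
    (hR : ∀ a m, a ∉ R a m) (hcard : ∀ a m, #(R a m) = r)
    (hdisj : ∀ a, Pairwise (Disjoint on R a)) (hrec : ∀ a m, IsRecoveringSet C a (R a m)) :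
    (#C : ℝ) ≤ (Fintype.card Q : ℝ) ^
      (Fintype.card α * ∏ j ∈ Icc 1 (Fintype.card κ), (j : ℝ) * r / (j * r + 1)) := by
  obtain ⟨σ, hσ⟩ := exists_perm_card_filter_not_exists_forall_lt_le R hR hcard hdisj
  have hC := card_le_pow_card_filter_not σ (p := fun a => ∃ m, ∀ x ∈ R a m, σ x < σ a)
    fun a ⟨m, hm⟩ => ⟨R a m, hrec a m, hm⟩
  calc (#C : ℝ) ≤ (Fintype.card Q : ℝ) ^ (#{a | ¬ ∃ m, ∀ x ∈ R a m, σ x < σ a} : ℝ) := by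
        rw [Real.rpow_natCast]; exact_mod_cast hC
    _ ≤ _ := Real.rpow_le_rpow_of_exponent_le (by exact_mod_cast Fintype.card_pos) hσ

theorem lrc_rate_bound_general {Q : Type*} [Fintype Q] (q n r t : ℕ)
    (hq : Fintype.card Q = q) (hq2 : 2 ≤ q) (hr : 1 ≤ r)
    (C : Finset (Fin n → Q))
    (hC : ∀ i : Fin n, ∃ R : Fin t → Finset (Fin n),
      (∀ j, i ∉ R j) ∧ (∀ j, (R j).card = r) ∧
      (∀ j j', j ≠ j' → Disjoint (R j) (R j')) ∧
      (∀ j, ∀ x ∈ C, ∀ y ∈ C, (∀ m ∈ R j, x m = y m) → x i = y i)) :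
    (C.card : ℝ) ≤ (q : ℝ) ^ ((n : ℝ) / ∏ j ∈ Finset.Icc 1 t, (1 + 1 / ((j : ℝ) * r))) ∧
      ∀ k : ℕ, C.card = q ^ k →
        (k : ℝ) / n ≤ 1 / ∏ j ∈ Finset.Icc 1 t, (1 + 1 / ((j : ℝ) * r)) := by
  choose R hRi hRcard hRdisj hRrec using hC
  have : Nonempty Q := Fintype.card_pos_iff.1 (by omega)
  have hbound := card_le_rpow_of_disjoint_recoveringSets C R hRi hRcard
    (fun i j j' h => hRdisj i j j' h) hRrec
  rw [Fintype.card_fin, Fintype.card_fin, hq, prod_inv_one_add_inv (by exact_mod_cast hr),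
    ← div_eq_mul_inv] at hbound
  refine ⟨hbound, fun k hk => div_le_of_le_mul₀ (Nat.cast_nonneg n) (by positivity) ?_⟩
  have hq1 : (1 : ℝ) < q := by exact_mod_cast hq2
  rw [hk, Nat.cast_pow, ← Real.rpow_natCast, Real.rpow_le_rpow_left_iff hq1] at hbound
  rwa [one_div_mul_eq_div]

/-- Upper bound on the cardinality (and hence rate) of an LRC code
with `t` pairwise disjoint recovering sets, each of size exactly `r`, for every coordinate. -/
theorem lrc_rate_bound {Q : Type*} [Fintype Q] (q n r t : ℕ)
    (hq : Fintype.card Q = q) (hq2 : 2 ≤ q) (hr : 1 ≤ r) (ht : 1 ≤ t)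
    (hn : t * r ≤ n - 1)
    (C : Finset (Fin n → Q))
    (hC : ∀ i : Fin n, ∃ R : Fin t → Finset (Fin n),
      (∀ j, i ∉ R j) ∧ (∀ j, (R j).card = r) ∧
      (∀ j j', j ≠ j' → Disjoint (R j) (R j')) ∧
      (∀ j, ∀ x ∈ C, ∀ y ∈ C, (∀ m ∈ R j, x m = y m) → x i = y i)) :
    (C.card : ℝ) ≤ (q : ℝ) ^ ((n : ℝ) / ∏ j ∈ Finset.Icc 1 t, (1 + 1 / ((j : ℝ) * r))) ∧
      ∀ k : ℕ, C.card = q ^ k →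
        (k : ℝ) / n ≤ 1 / ∏ j ∈ Finset.Icc 1 t, (1 + 1 / ((j : ℝ) * r)) :=
  lrc_rate_bound_general q n r t hq hq2 hr C hC
end

section
/- Let q ≥ 2, and let C be a code of length n over an alphabet Q of size q with |C| = q^k such that every coordinate i ∈ [n] has t pairwise disjoint recovering sets, each of size exactly r. Then k/n ≤ (t+1)^{−1/r}. -/
/-!
Order the coordinates by a permutation `π`. If some recovering set of `i` lies entirely before
`i`, then the `i`-th symbol of a codeword is determined by earlier ones, so a codeword is
determined by its values on the remaining coordinates and `k` is at most their number, for every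
`π`. Averaging over `π`: a set of `m` coordinates all precede `i` for a fraction `1 / (m + 1)` of
the permutations, so by inclusion–exclusion over the `t` disjoint recovering sets, `i` is left
over for a fraction `∑ₛ (-1)ˢ C(t, s) / (1 + s r) = t! rᵗ / ∏_{j ≤ t} (1 + j r)` of them, and
Bernoulli's inequality bounds the `r`-th power of this product by `1 / (t + 1)`.
-/

open Finset Equiv Function fwdDiff
open scoped Nat

namespace Equiv.Perm

variable {α : Type*} [Fintype α] [LinearOrder α]

def placingBefore (U : Finset α) (i : α) : Finset (Perm α) :=
  {π | ∀ m ∈ U, π m < π i}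

@[simp]
lemma mem_placingBefore {U : Finset α} {i : α} {π : Perm α} :
    π ∈ placingBefore U i ↔ ∀ m ∈ U, π m < π i := by
  simp [placingBefore]

lemma card_placingBefore_erase_eq {s : Finset α} {i z : α} (hi : i ∈ s) (hz : z ∈ s) :
    #(placingBefore (s.erase z) z) = #(placingBefore (s.erase i) i) := by
  refine card_equiv (Equiv.mulRight (swap z i)) fun π => ?_
  simp only [mem_placingBefore, coe_mulRight, Perm.mul_apply, swap_apply_right, mem_erase]
  constructor
  · intro h m ⟨hmi, hm⟩
    apply h
    rw [swap_apply_def]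
    split_ifs <;> grind
  · intro h m ⟨hmz, hm⟩
    have := h (swap z i m)
    rw [swap_apply_self, swap_apply_def] at this
    split_ifs at this <;> grind

lemma card_placingBefore_mul {U : Finset α} {i : α} (hi : i ∉ U) :
    #(placingBefore U i) * (#U + 1) = (Fintype.card α)! := by
  -- Split the permutations according to which element of `s` comes last.
  set s := insert i U
  have hcover : s.biUnion (fun z => placingBefore (s.erase z) z) = univ := by
    refine eq_univ_of_forall fun π => ?_
    obtain ⟨z, hz, hmax⟩ := s.exists_max_image π (insert_nonempty i U)
    refine mem_biUnion.2 ⟨z, hz, mem_placingBefore.2 fun m hm => ?_⟩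
    exact (hmax m (mem_of_mem_erase hm)).lt_of_ne (π.injective.ne (ne_of_mem_erase hm))
  have hdisj : (s : Set α).PairwiseDisjoint (fun z => placingBefore (s.erase z) z) := by
    intro z hz w hw hzw
    simp only [onFun, disjoint_left, mem_placingBefore]
    exact fun π hπz hπw =>
      (hπz w (mem_erase.2 ⟨hzw.symm, hw⟩)).asymm (hπw z (mem_erase.2 ⟨hzw, hz⟩))
  rw [← Fintype.card_perm, ← Finset.card_univ, ← hcover, card_biUnion hdisj,
    sum_congr rfl fun z hz => card_placingBefore_erase_eq (mem_insert_self i U) hz, sum_const,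
    smul_eq_mul, card_insert_of_notMem hi, erase_insert hi, mul_comm]

lemma card_filter_forall_notMem_placingBefore {ι : Type*} [Fintype ι] {R : ι → Finset α}
    {i : α} {r : ℕ} (hi : ∀ j, i ∉ R j) (hR : ∀ j, #(R j) = r)
    (hdisj : Pairwise (_root_.Disjoint on R)) :
    (#{π | ∀ j, π ∉ placingBefore (R j) i} : ℝ) = (Fintype.card α)! *
      ∑ s ∈ range (Fintype.card ι + 1), (-1 : ℝ) ^ s * (Fintype.card ι).choose s / (1 + s * r) := by
  have hinter (S : Finset ι) :
      S.inf (fun j => placingBefore (R j) i) = placingBefore (S.biUnion R) i := by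
    ext π
    simp only [mem_inf, mem_placingBefore, mem_biUnion]
    grind
  have hcard (S : Finset ι) :
      (#(placingBefore (S.biUnion R) i) : ℝ) = (Fintype.card α)! / (1 + #S * r) := by
    have h := card_placingBefore_mul (U := S.biUnion R) (i := i) (by simp [hi])
    rw [card_biUnion (fun j _ j' _ hjj' => hdisj hjj'), sum_congr rfl fun j _ => hR j,
      sum_const, smul_eq_mul] at h
    rw [eq_div_iff (by positivity)]
    exact_mod_cast (by linarith : _ = _)
  have hie := inclusion_exclusion_card_inf_compl univ fun j => placingBefore (R j) i
  have hfilter : ({π | ∀ j, π ∉ placingBefore (R j) i} : Finset (Perm α)) =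
      univ.inf fun j => (placingBefore (R j) i)ᶜ := by
    ext π; simp [mem_inf]
  rw [hfilter, ← Int.cast_natCast, hie]
  push_cast
  simp only [hinter, hcard]
  rw [sum_powerset_apply_card (fun s => (-1 : ℝ) ^ s * ((Fintype.card α)! / (1 + s * r))),
    Finset.card_univ, mul_sum]
  refine sum_congr rfl fun s _ => ?_
  rw [nsmul_eq_mul]
  ring

end Equiv.Perm

lemma fwdDiff_iter_inv_apply {r : ℝ} (hr : 0 ≤ r) (t : ℕ) {a : ℝ} (ha : 0 < a) :
    (Δ_[r])^[t] (·⁻¹) a = (-1) ^ t * t ! * r ^ t / ∏ j ∈ range (t + 1), (a + j * r) := by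
  induction t generalizing a with
  | zero => simp
  | succ t ih =>
    set P := ∏ j ∈ range (t + 1), (a + j * r)
    set P' := ∏ j ∈ range (t + 1), (a + r + j * r)
    have hshift : P' * a = P * (a + (t + 1) * r) := by
      have h := prod_range_succ' (fun j : ℕ => a + j * r) (t + 1)
      rw [prod_range_succ] at h
      push_cast at h
      rw [h, zero_mul, add_zero]
      exact congrArg (· * a) (prod_congr rfl fun j _ => by ring)
    have hP : 0 < P := prod_pos fun j _ => by positivity
    have hP' : 0 < P' := prod_pos fun j _ => by positivity
    rw [Function.iterate_succ_apply', fwdDiff, ih (by positivity), ih ha,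
      prod_range_succ (fun j : ℕ => a + j * r) (t + 1),
      div_sub_div _ _ hP'.ne' hP.ne', div_eq_div_iff (by positivity) (by positivity)]
    push_cast [Nat.factorial_succ]
    linear_combination (-(-1) ^ t * t ! * r ^ t * P) * hshift

lemma sum_range_alternating_choose_div {r : ℝ} (hr : 0 ≤ r) (t : ℕ) {a : ℝ} (ha : 0 < a) :
    ∑ s ∈ range (t + 1), (-1) ^ s * t.choose s / (a + s * r)
      = t ! * r ^ t / ∏ j ∈ range (t + 1), (a + j * r) := by
  have hsign : ∀ s ≤ t, (-1 : ℝ) ^ s = (-1) ^ t * (-1) ^ (t - s) := fun s hs => by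
    obtain ⟨d, rfl⟩ := Nat.exists_eq_add_of_le hs
    rw [Nat.add_sub_cancel_left, pow_add, mul_assoc, ← mul_pow, neg_one_mul, neg_neg, one_pow,
      mul_one]
  calc ∑ s ∈ range (t + 1), (-1) ^ s * t.choose s / (a + s * r)
      = (-1) ^ t * (Δ_[r])^[t] (·⁻¹) a := by
        rw [fwdDiff_iter_eq_sum_shift, mul_sum]
        refine sum_congr rfl fun s hs => ?_
        rw [hsign s (mem_range_succ_iff.1 hs), zsmul_eq_mul, nsmul_eq_mul]
        push_cast
        ring
    _ = t ! * r ^ t / ∏ j ∈ range (t + 1), (a + j * r) := by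
        rw [fwdDiff_iter_inv_apply hr t ha, ← mul_div_assoc, ← mul_assoc, ← mul_assoc, ← mul_pow]
        norm_num

lemma mul_div_mul_add_one_pow_le {m : ℝ} (hm : 0 < m) {r : ℕ} (hr : 1 ≤ r) :
    (m * r / (m * r + 1)) ^ r ≤ m / (m + 1) := by
  have hr' : (0 : ℝ) < r := by exact_mod_cast hr
  have bernoulli : (m + 1) / m ≤ ((m * r + 1) / (m * r)) ^ r :=
    calc (m + 1) / m = 1 + r * (m * r)⁻¹ := by field_simp
      _ ≤ (1 + (m * r)⁻¹) ^ r := one_add_mul_le_pow (by linarith [inv_pos.2 (mul_pos hm hr')]) r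
      _ = ((m * r + 1) / (m * r)) ^ r := by field_simp
  calc (m * r / (m * r + 1)) ^ r = (((m * r + 1) / (m * r)) ^ r)⁻¹ := by rw [← inv_pow, inv_div]
    _ ≤ ((m + 1) / m)⁻¹ := inv_anti₀ (by positivity) bernoulli
    _ = m / (m + 1) := inv_div _ _

lemma factorial_mul_pow_div_prod_pow_le {r : ℕ} (hr : 1 ≤ r) (t : ℕ) :
    (t ! * r ^ t / ∏ j ∈ range (t + 1), (1 + (j : ℝ) * r)) ^ r ≤ (t + 1 : ℝ)⁻¹ := by
  induction t with
  | zero => simp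
  | succ t ih =>
    have hrec : (t + 1)! * r ^ (t + 1) / ∏ j ∈ range (t + 2), (1 + (j : ℝ) * r)
        = t ! * r ^ t / (∏ j ∈ range (t + 1), (1 + (j : ℝ) * r)) *
          ((t + 1) * r / ((t + 1) * r + 1)) := by
      rw [prod_range_succ _ (t + 1), Nat.factorial_succ, pow_succ]
      push_cast
      rw [div_mul_div_comm]
      ring
    rw [hrec, mul_pow]
    calc _ ≤ (t + 1 : ℝ)⁻¹ * ((t + 1) / (t + 1 + 1)) :=
          mul_le_mul ih (mul_div_mul_add_one_pow_le (by positivity) hr) (by positivity)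
            (by positivity)
      _ = (↑(t + 1) + 1 : ℝ)⁻¹ := by push_cast; field_simp

lemma factorial_mul_pow_div_prod_le_rpow {r : ℕ} (hr : 1 ≤ r) (t : ℕ) :
    t ! * r ^ t / ∏ j ∈ range (t + 1), (1 + (j : ℝ) * r) ≤ (t + 1 : ℝ) ^ (-1 / r : ℝ) := by
  have ht : (0 : ℝ) ≤ t + 1 := by positivity
  rw [neg_div, one_div, Real.rpow_neg ht, ← Real.inv_rpow ht,
    Real.le_rpow_inv_iff_of_pos (by positivity) (by positivity) (by exact_mod_cast hr),
    Real.rpow_natCast]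
  exact factorial_mul_pow_div_prod_pow_le hr t

lemma card_le_pow_card_of_recoverable {ι Q α : Type*} [Fintype Q] [Preorder α]
    [WellFoundedLT α] (C : Finset (ι → Q)) (B : Finset ι) (rank : ι → α)
    (hrec : ∀ i ∉ B, ∃ R : Finset ι, (∀ m ∈ R, rank m < rank i) ∧
      ∀ x ∈ C, ∀ y ∈ C, (∀ m ∈ R, x m = y m) → x i = y i) :
    #C ≤ Fintype.card Q ^ #B := by
  classical
  have hinj : Set.InjOn (fun x : ι → Q => fun b : B => x b) C := by
    intro x hx y hy hxy
    funext i
    induction i using (InvImage.wf rank wellFounded_lt).induction with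
    | _ i ih =>
      by_cases hi : i ∈ B
      · exact congrFun hxy ⟨i, hi⟩
      · obtain ⟨R, hR, hdet⟩ := hrec i hi
        exact hdet x hx y hy fun m hm => ih m (hR m hm)
  calc #C ≤ #(univ : Finset (B → Q)) :=
        card_le_card_of_injOn _ (fun _ _ => mem_coe.2 (mem_univ _)) hinj
    _ = Fintype.card Q ^ #B := by simp

lemma le_card_mul_of_forall_le_card_filter {A B : Type*} [Fintype A] [Nonempty A]
    [Fintype B] (P : A → B → Prop) [∀ a b, Decidable (P a b)] {k : ℕ} {X : ℝ}
    (hk : ∀ a, k ≤ #{b | P a b}) (hX : ∀ b, (#{a | P a b} : ℝ) ≤ Fintype.card A * X) :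
    (k : ℝ) ≤ Fintype.card B * X := by
  refine le_of_mul_le_mul_left ?_ (Nat.cast_pos.2 (Fintype.card_pos (α := A)))
  calc (Fintype.card A * k : ℝ) = ∑ _a : A, (k : ℝ) := by simp
    _ ≤ ∑ a, (#{b | P a b} : ℝ) := sum_le_sum fun a _ => by exact_mod_cast hk a
    _ = ∑ b, (#{a | P a b} : ℝ) := by
        simp only [card_filter, Nat.cast_sum]
        exact sum_comm
    _ ≤ ∑ _b : B, Fintype.card A * X := sum_le_sum fun b _ => hX b
    _ = Fintype.card A * (Fintype.card B * X) := by
        simp only [sum_const, card_univ, nsmul_eq_mul]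
        ring

theorem lrc_rate_root_bound_general {Q : Type*} [Fintype Q] (q n k r t : ℕ)
    (hq : Fintype.card Q = q) (hq2 : 2 ≤ q) (hr : 1 ≤ r)
    (C : Finset (Fin n → Q)) (hcard : C.card = q ^ k)
    (hC : ∀ i : Fin n, ∃ R : Fin t → Finset (Fin n),
      (∀ j, i ∉ R j) ∧ (∀ j, (R j).card = r) ∧
      (∀ j j', j ≠ j' → Disjoint (R j) (R j')) ∧
      (∀ j, ∀ x ∈ C, ∀ y ∈ C, (∀ m ∈ R j, x m = y m) → x i = y i)) :
    (k : ℝ) / n ≤ ((t : ℝ) + 1) ^ (-(1 : ℝ) / r) := by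
  choose R hiR hcardR hdisj hrec using hC
  set X : ℝ := t ! * r ^ t / ∏ j ∈ range (t + 1), (1 + (j : ℝ) * r)
  have hk (π : Perm (Fin n)) : k ≤ #{i | ∀ j, π ∉ Perm.placingBefore (R i j) i} := by
    refine (Nat.pow_le_pow_iff_right hq2).1 ?_
    rw [← hcard, ← hq]
    refine card_le_pow_card_of_recoverable C _ π fun i hi => ?_
    simp only [mem_filter, mem_univ, true_and, not_forall, not_not] at hi
    obtain ⟨j, hj⟩ := hi
    exact ⟨R i j, Perm.mem_placingBefore.1 hj, hrec i j⟩
  have hcount (i : Fin n) :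
      (#{π : Perm (Fin n) | ∀ j, π ∉ Perm.placingBefore (R i j) i} : ℝ)
        = Fintype.card (Perm (Fin n)) * X := by
    have h := Perm.card_filter_forall_notMem_placingBefore (hiR i) (hcardR i)
      (fun _ _ => hdisj i _ _)
    rw [Fintype.card_fin, Fintype.card_fin,
      sum_range_alternating_choose_div (Nat.cast_nonneg r) t one_pos] at h
    rw [Fintype.card_perm, Fintype.card_fin]
    convert h
  have hkX := le_card_mul_of_forall_le_card_filter _ hk fun i => (hcount i).le
  rw [Fintype.card_fin] at hkX
  refine div_le_of_le_mul₀ (by positivity) (by positivity) ?_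
  rw [mul_comm]
  exact hkX.trans
    (mul_le_mul_of_nonneg_left (factorial_mul_pow_div_prod_le_rpow hr t) (by positivity))

/-- The rate of an `(n, k, r, t)` LRC code satisfies `k/n ≤ (t+1)^{-1/r}`. -/
theorem lrc_rate_root_bound {Q : Type*} [Fintype Q] (q n k r t : ℕ)
    (hq : Fintype.card Q = q) (hq2 : 2 ≤ q) (hr : 1 ≤ r) (ht : 1 ≤ t)
    (hn : t * r ≤ n - 1)
    (C : Finset (Fin n → Q)) (hcard : C.card = q ^ k)
    (hC : ∀ i : Fin n, ∃ R : Fin t → Finset (Fin n),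
      (∀ j, i ∉ R j) ∧ (∀ j, (R j).card = r) ∧
      (∀ j j', j ≠ j' → Disjoint (R j) (R j')) ∧
      (∀ j, ∀ x ∈ C, ∀ y ∈ C, (∀ m ∈ R j, x m = y m) → x i = y i)) :
    (k : ℝ) / n ≤ ((t : ℝ) + 1) ^ (-(1 : ℝ) / r) :=
  lrc_rate_root_bound_general q n k r t hq hq2 hr C hcard hC
end

section
/- For all integers r ≥ 1 and t ≥ 1, the following double inequality holds: (t+1)^{1/r} ≤ ∏_{j=1}^{t} (1 + 1/(jr)) ≤ (t+1)^{1/r} · (1 + 1/r). -/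
private lemma nat_key (r m : ℕ) (h : r ≤ m) :
    (m + 1) ^ r * (m - r + 1) ≤ m ^ r * (m + 1) := by
  induction r with
  | zero => simp
  | succ r ih =>
    have hr : r ≤ m := Nat.le_of_succ_le h
    have h1 : m - (r + 1) + 1 = m - r := by omega
    have h2 : (m + 1) * (m - r) ≤ m * (m - r + 1) := by
      have : m - r ≤ m := Nat.sub_le _ _
      nlinarith [Nat.sub_le m r]
    calc (m + 1) ^ (r + 1) * (m - (r + 1) + 1)
        = (m + 1) ^ r * ((m + 1) * (m - r)) := by rw [h1]; ring
      _ ≤ (m + 1) ^ r * (m * (m - r + 1)) := Nat.mul_le_mul_left _ h2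
      _ = m * ((m + 1) ^ r * (m - r + 1)) := by ring
      _ ≤ m * (m ^ r * (m + 1)) := Nat.mul_le_mul_left _ (ih hr)
      _ = m ^ (r + 1) * (m + 1) := by ring

private lemma real_key (r m : ℕ) (hr : 1 ≤ r) (h : r ≤ m) :
    (1 + 1 / (m : ℝ)) ^ r ≤ ((m : ℝ) + 1) / ((m : ℝ) - r + 1) := by
  have hm : 0 < (m : ℝ) := by
    have : 0 < m := lt_of_lt_of_le hr h
    exact_mod_cast this
  have hd : 0 < (m : ℝ) - r + 1 := by
    have : (r : ℝ) ≤ m := by exact_mod_cast h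
    linarith
  have hk := nat_key r m h
  have hk' : ((m : ℝ) + 1) ^ r * ((m : ℝ) - r + 1) ≤ (m : ℝ) ^ r * ((m : ℝ) + 1) := by
    have hcast : ((m : ℝ) - r + 1) = ((m - r + 1 : ℕ) : ℝ) := by
      push_cast [Nat.cast_sub h]; ring
    rw [hcast]
    exact_mod_cast hk
  have h1 : (1 + 1 / (m : ℝ)) = ((m : ℝ) + 1) / m := by field_simp
  rw [h1, div_pow, div_le_div_iff₀ (by positivity) hd]
  calc ((m : ℝ) + 1) ^ r * ((m : ℝ) - r + 1) ≤ (m : ℝ) ^ r * ((m : ℝ) + 1) := hk'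
    _ = ((m : ℝ) + 1) * (m : ℝ) ^ r := by ring

private lemma prodL (r t : ℕ) (hr : 1 ≤ r) (ht : 1 ≤ t) :
    ((t : ℝ) + 1) ≤ (∏ j ∈ Finset.Icc 1 t, (1 + 1 / ((j : ℝ) * r))) ^ r := by
  have hrR : (0 : ℝ) < r := by exact_mod_cast hr
  induction t, ht using Nat.le_induction with
  | base =>
    simp only [Finset.Icc_self, Finset.prod_singleton, Nat.cast_one, one_mul]
    have hb : (-2 : ℝ) ≤ 1 / (r : ℝ) := by
      have : (0:ℝ) ≤ 1 / (r:ℝ) := by positivity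
      linarith
    have := one_add_mul_le_pow hb r
    have h1 : (r : ℝ) * (1 / r) = 1 := by field_simp
    push_cast
    nlinarith
  | succ t ht ih =>
    rw [Finset.prod_Icc_succ_top (by omega), mul_pow]
    have htR : (0 : ℝ) < (t : ℝ) + 1 := by positivity
    have hfac : 1 + 1 / ((t : ℝ) + 1) ≤ (1 + 1 / (((t : ℕ) + 1 : ℝ) * r)) ^ r := by
      have hb : (-2 : ℝ) ≤ 1 / (((t : ℝ) + 1) * r) := by
        have : (0:ℝ) ≤ 1 / (((t : ℝ) + 1) * (r:ℝ)) := by positivity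
        linarith
      have := one_add_mul_le_pow hb r
      have h1 : (r : ℝ) * (1 / (((t : ℝ) + 1) * r)) = 1 / ((t : ℝ) + 1) := by
        field_simp
      rw [h1] at this
      convert this using 3 <;> push_cast <;> ring
    have hprev : (0 : ℝ) ≤ (∏ j ∈ Finset.Icc 1 t, (1 + 1 / ((j : ℝ) * r))) ^ r := by
      apply pow_nonneg
      apply Finset.prod_nonneg
      intro j hj
      have hj1 : 1 ≤ j := (Finset.mem_Icc.mp hj).1
      have : (0 : ℝ) < (j : ℝ) * r := by
        have : (0:ℝ) < j := by exact_mod_cast hj1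
        positivity
      positivity
    have hmul : ((t : ℝ) + 1) * (1 + 1 / ((t : ℝ) + 1)) ≤
        (∏ j ∈ Finset.Icc 1 t, (1 + 1 / ((j : ℝ) * r))) ^ r *
          (1 + 1 / (((t : ℕ) + 1 : ℝ) * r)) ^ r := by
      apply mul_le_mul ih hfac (by positivity) hprev
    have heq : ((t : ℝ) + 1) * (1 + 1 / ((t : ℝ) + 1)) = (t : ℝ) + 2 := by
      field_simp; ring
    push_cast
    push_cast at hmul
    linarith [hmul, heq.symm.le]

private lemma prodU (r t : ℕ) (hr : 1 ≤ r) (ht : 1 ≤ t) :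
    (∏ j ∈ Finset.Icc 2 t, (1 + 1 / ((j : ℝ) * r))) ^ r ≤ ((t : ℝ) * r + 1) / (r + 1) := by
  have hrR : (0 : ℝ) < r := by exact_mod_cast hr
  induction t, ht using Nat.le_induction with
  | base =>
    have : Finset.Icc 2 1 = (∅ : Finset ℕ) := by decide
    rw [this]
    simp
    rw [div_self (by positivity)]
  | succ t ht ih =>
    rw [Finset.prod_Icc_succ_top (by omega), mul_pow]
    have hmr : r ≤ (t + 1) * r := by
      have : 1 * r ≤ (t + 1) * r := Nat.mul_le_mul_right r (by omega)
      simpa using this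
    have hkey := real_key r ((t + 1) * r) hr hmr
    push_cast at hkey
    have hden : ((t : ℝ) + 1) * r - r + 1 = (t : ℝ) * r + 1 := by ring
    rw [hden] at hkey
    have hfac : (1 + 1 / (((t : ℕ) + 1 : ℝ) * r)) ^ r ≤
        (((t : ℝ) + 1) * r + 1) / ((t : ℝ) * r + 1) := by
      convert hkey using 3 <;> push_cast <;> ring
    have hprev : (0 : ℝ) ≤ (∏ j ∈ Finset.Icc 2 t, (1 + 1 / ((j : ℝ) * r))) ^ r := by
      apply pow_nonneg
      apply Finset.prod_nonneg
      intro j hj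
      have hj1 : 2 ≤ j := (Finset.mem_Icc.mp hj).1
      have : (0 : ℝ) < (j : ℝ) * r := by
        have : (0:ℝ) < j := by exact_mod_cast (by omega : 0 < j)
        positivity
      positivity
    have htR : (0 : ℝ) ≤ (t : ℝ) := by positivity
    have hmul : (∏ j ∈ Finset.Icc 2 t, (1 + 1 / ((j : ℝ) * r))) ^ r *
          (1 + 1 / (((t : ℕ) + 1 : ℝ) * r)) ^ r ≤
        (((t : ℝ) * r + 1) / (r + 1)) * ((((t : ℝ) + 1) * r + 1) / ((t : ℝ) * r + 1)) := by
      apply mul_le_mul ih hfac (by positivity) (by positivity)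
    have heq : (((t : ℝ) * r + 1) / (r + 1)) * ((((t : ℝ) + 1) * r + 1) / ((t : ℝ) * r + 1))
        = (((t : ℝ) + 1) * r + 1) / (r + 1) := by
      have h1 : (t : ℝ) * r + 1 ≠ 0 := by positivity
      have h2 : (r : ℝ) + 1 ≠ 0 := by positivity
      field_simp
    push_cast
    push_cast at hmul heq
    linarith

/-- `(t+1)^{1/r} ≤ ∏_{j=1}^{t} (1 + 1/(jr)) ≤ (t+1)^{1/r}·(1 + 1/r)`. -/
theorem prod_root_bounds (r t : ℕ) (hr : 1 ≤ r) (ht : 1 ≤ t) :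
    ((t : ℝ) + 1) ^ ((1 : ℝ) / r) ≤ ∏ j ∈ Finset.Icc 1 t, (1 + 1 / ((j : ℝ) * r)) ∧
      ∏ j ∈ Finset.Icc 1 t, (1 + 1 / ((j : ℝ) * r)) ≤
        ((t : ℝ) + 1) ^ ((1 : ℝ) / r) * (1 + 1 / (r : ℝ)) := by
  have hrR : (0 : ℝ) < r := by exact_mod_cast hr
  have hrne : (r : ℝ) ≠ 0 := ne_of_gt hrR
  have hpos : ∀ j ∈ Finset.Icc 1 t, (0 : ℝ) < 1 + 1 / ((j : ℝ) * r) := by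
    intro j hj
    have hj1 : 1 ≤ j := (Finset.mem_Icc.mp hj).1
    have : (0 : ℝ) < j := by exact_mod_cast hj1
    positivity
  set P := ∏ j ∈ Finset.Icc 1 t, (1 + 1 / ((j : ℝ) * r)) with hP
  have hPpos : 0 < P := Finset.prod_pos hpos
  have hroot : ∀ x : ℝ, 0 ≤ x → (x ^ r) ^ ((1 : ℝ) / r) = x := by
    intro x hx
    rw [← Real.rpow_natCast x r, ← Real.rpow_mul hx]
    rw [mul_one_div, div_self hrne, Real.rpow_one]
  constructor
  · have hL := prodL r t hr ht
    calc ((t : ℝ) + 1) ^ ((1 : ℝ) / r) ≤ (P ^ r) ^ ((1 : ℝ) / r) :=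
          Real.rpow_le_rpow (by positivity) hL (by positivity)
      _ = P := hroot P hPpos.le
  · -- split off the j = 1 factor
    have hsplit : Finset.Icc 1 t = insert 1 (Finset.Icc 2 t) := by
      ext j; simp [Finset.mem_Icc]; omega
    have hnotmem : (1 : ℕ) ∉ Finset.Icc 2 t := by simp
    set Q := ∏ j ∈ Finset.Icc 2 t, (1 + 1 / ((j : ℝ) * r)) with hQ
    have hPQ : P = (1 + 1 / (r : ℝ)) * Q := by
      rw [hP, hsplit, Finset.prod_insert hnotmem, Nat.cast_one, one_mul]
    have hQnn : 0 ≤ Q := by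
      apply Finset.prod_nonneg
      intro j hj
      have hj1 : 2 ≤ j := (Finset.mem_Icc.mp hj).1
      have : (0 : ℝ) < j := by exact_mod_cast (by omega : 0 < j)
      positivity
    have hU := prodU r t hr ht
    have hUt : Q ^ r ≤ (t : ℝ) + 1 := by
      have h2 : ((t : ℝ) * r + 1) / (r + 1) ≤ (t : ℝ) + 1 := by
        rw [div_le_iff₀ (by positivity)]
        have : (0 : ℝ) ≤ t := by positivity
        nlinarith
      linarith
    have hQle : Q ≤ ((t : ℝ) + 1) ^ ((1 : ℝ) / r) := by
      calc Q = (Q ^ r) ^ ((1 : ℝ) / r) := (hroot Q hQnn).symm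
        _ ≤ ((t : ℝ) + 1) ^ ((1 : ℝ) / r) :=
            Real.rpow_le_rpow (by positivity) hUt (by positivity)
    rw [hPQ, mul_comm]
    apply mul_le_mul_of_nonneg_right hQle (by positivity)
end

section
/- For all integers r ≥ 1 and t ≥ 1, ∑_{j=1}^{t} (−1)^{j−1} · binom(t, j) / (jr + 1) = 1 − 1/∏_{j=1}^{t} (1 + 1/(jr)). -/
open Finset

lemma key (t : ℕ) : ∀ x : ℚ, (∀ j ∈ Finset.range (t+1), x + j ≠ 0) →
    ∑ j ∈ Finset.range (t+1), (-1:ℚ)^j * t.choose j / (x + j)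
      = t.factorial / ∏ j ∈ Finset.range (t+1), (x + j) := by
  induction t with
  | zero => intro x hx; simp
  | succ t ih =>
    intro x hx
    have hx0 : x ≠ 0 := by simpa using hx 0 (by simp)
    have h1 : ∀ j ∈ Finset.range (t+1), x + j ≠ 0 := fun j hj =>
      hx j (Finset.mem_range.2 (Nat.lt_succ_of_lt (Finset.mem_range.1 hj)))
    have h2 : ∀ j ∈ Finset.range (t+1), (x+1) + j ≠ 0 := by
      intro j hj
      have h := hx (j+1) (by simp only [Finset.mem_range] at hj ⊢; omega)
      push_cast at h ⊢
      intro hc; apply h; linarith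
    have hlast : x + ((t:ℚ)+1) ≠ 0 := by
      have := hx (t+1) (by simp)
      push_cast at this; exact this
    have hlast2 : x + 1 + (t:ℚ) ≠ 0 := by intro h; apply hlast; linarith
    have hsum : ∑ j ∈ Finset.range (t+2), (-1:ℚ)^j * (t+1).choose j / (x+j)
        = ∑ j ∈ Finset.range (t+1), (-1:ℚ)^j * t.choose j / (x+j)
          - ∑ j ∈ Finset.range (t+1), (-1:ℚ)^j * t.choose j / ((x+1)+j) := by
      rw [Finset.sum_range_succ' (fun j => (-1:ℚ)^j * ((t+1).choose j : ℚ) / (x+j)) (t+1),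
        Finset.sum_range_succ (fun j => (-1:ℚ)^(j+1) * ((t+1).choose (j+1) : ℚ) / (x+(j+1 : ℕ))) t,
        Finset.sum_range_succ' (fun j => (-1:ℚ)^j * (t.choose j : ℚ) / (x+j)) t,
        Finset.sum_range_succ (fun j => (-1:ℚ)^j * (t.choose j : ℚ) / ((x+1)+j)) t]
      have hterm : ∀ j ∈ Finset.range t,
          (-1:ℚ)^(j+1) * ((t+1).choose (j+1) : ℚ) / (x+((j+1 : ℕ):ℚ))
          = (-1:ℚ)^(j+1) * (t.choose (j+1) : ℚ) / (x+((j+1 : ℕ):ℚ))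
            - (-1:ℚ)^j * (t.choose j : ℚ) / ((x+1)+j) := by
        intro j hj
        rw [Nat.choose_succ_succ]
        push_cast
        rw [show x + ((j:ℚ)+1) = x + 1 + j by ring, div_sub_div_same]
        congr 1
        ring
      rw [Finset.sum_congr rfl hterm, Finset.sum_sub_distrib]
      simp only [Nat.choose_self, Nat.choose_zero_right, Nat.cast_one, Nat.cast_zero, pow_zero,
        one_mul, add_zero]
      push_cast
      field_simp
      ring
    rw [hsum, ih x h1, ih (x+1) h2]
    have e2 : ∏ j ∈ Finset.range (t+2), (x+j) = x * ∏ j ∈ Finset.range (t+1), ((x+1)+j) := by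
      rw [Finset.prod_range_succ' (fun j => x + (j:ℚ)) (t+1)]
      have hc : ∀ j ∈ Finset.range (t+1), x + ((j+1 : ℕ):ℚ) = (x+1)+j := by
        intro j _; push_cast; ring
      rw [Finset.prod_congr rfl hc]
      push_cast; ring
    have e1 : ∏ j ∈ Finset.range (t+2), (x+j) = (∏ j ∈ Finset.range (t+1), (x+j)) * (x + ((t:ℚ)+1)) := by
      rw [Finset.prod_range_succ]; push_cast; ring
    have hP1 : ∏ j ∈ Finset.range (t+1), (x+j) ≠ 0 := Finset.prod_ne_zero_iff.2 h1
    have hP2eq : ∏ j ∈ Finset.range (t+1), ((x+1)+j)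
        = (∏ j ∈ Finset.range (t+1), (x+j)) * (x + ((t:ℚ)+1)) / x := by
      rw [eq_div_iff hx0, ← e1, e2]; ring
    rw [e1, hP2eq, Nat.factorial_succ]
    push_cast
    field_simp
    ring

/-- `∑_{j=1}^{t} (−1)^{j−1}·C(t,j)/(jr+1) = 1 − 1/∏_{j=1}^{t}(1 + 1/(jr))`. -/
theorem alt_sum_eq_one_sub_inv_prod (r t : ℕ) (hr : 1 ≤ r) (ht : 1 ≤ t) :
    ∑ j ∈ Finset.Icc 1 t, (-1 : ℚ) ^ (j - 1) * (t.choose j : ℚ) / ((j : ℚ) * r + 1) =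
      1 - 1 / ∏ j ∈ Finset.Icc 1 t, (1 + 1 / ((j : ℚ) * r)) := by
  set x : ℚ := ((r:ℚ))⁻¹ with hxdef
  have hr0 : (0:ℚ) < r := by exact_mod_cast hr
  have hxpos : 0 < x := by positivity
  have hx0 : x ≠ 0 := ne_of_gt hxpos
  have hne : ∀ j ∈ Finset.range (t+1), x + (j:ℚ) ≠ 0 := by
    intro j _
    have : (0:ℚ) < x + j := by positivity
    exact ne_of_gt this
  have hkey := key t x hne
  have hIcc : Finset.Icc 1 t = (Finset.range (t+1)).erase 0 := by
    ext j; simp only [Finset.mem_Icc, Finset.mem_erase, Finset.mem_range]; omega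
  have h0 : (0:ℕ) ∈ Finset.range (t+1) := by simp
  -- split the key sum
  have hS : (1/x) + ∑ j ∈ Finset.Icc 1 t, (-1:ℚ)^j * t.choose j / (x + j)
      = t.factorial / ∏ j ∈ Finset.range (t+1), (x + j) := by
    rw [hIcc, show (1:ℚ)/x = (-1:ℚ)^(0:ℕ) * (t.choose 0 : ℚ)/(x + ((0:ℕ):ℚ)) by simp,
      Finset.add_sum_erase (Finset.range (t+1)) (fun j => (-1:ℚ)^j * (t.choose j : ℚ)/(x + (j:ℚ))) h0]
    exact hkey
  -- split the product
  have hA : ∏ j ∈ Finset.range (t+1), (x + (j:ℚ)) = x * ∏ j ∈ Finset.Icc 1 t, (x + (j:ℚ)) := by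
    rw [hIcc, ← Finset.mul_prod_erase (Finset.range (t+1)) (fun j => x + (j:ℚ)) h0]
    norm_num
  have hAne : ∏ j ∈ Finset.Icc 1 t, (x + (j:ℚ)) ≠ 0 := by
    apply Finset.prod_ne_zero_iff.2
    intro j _
    have : (0:ℚ) < x + j := by positivity
    exact ne_of_gt this
  -- rewrite LHS terms
  have hterm : ∀ j ∈ Finset.Icc 1 t, (-1 : ℚ) ^ (j - 1) * (t.choose j : ℚ) / ((j : ℚ) * r + 1)
      = -(x * ((-1:ℚ)^j * t.choose j / (x + j))) := by
    intro j hj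
    have hj1 : 1 ≤ j := (Finset.mem_Icc.1 hj).1
    obtain ⟨k, rfl⟩ : ∃ k, j = k + 1 := ⟨j - 1, by omega⟩
    have hd1 : ((k:ℚ)+1) * r + 1 ≠ 0 := by positivity
    have hd2 : x + ((k:ℚ)+1) ≠ 0 := by positivity
    simp only [Nat.add_sub_cancel]
    push_cast
    rw [hxdef]
    rw [pow_succ]
    field_simp
    ring
  rw [Finset.sum_congr rfl hterm]
  -- rewrite RHS product
  have hfact : ∏ j ∈ Finset.Icc 1 t, ((j:ℚ)) = (t.factorial : ℚ) := by
    rw [← Nat.cast_prod]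
    congr 1
    rw [show Finset.Icc 1 t = Finset.Ico 1 (t+1) from (Finset.Ico_add_one_right_eq_Icc 1 t).symm,
      Finset.prod_Ico_id_eq_factorial]
  have hQ : ∏ j ∈ Finset.Icc 1 t, (1 + 1 / ((j : ℚ) * r))
      = (∏ j ∈ Finset.Icc 1 t, (x + (j:ℚ))) / (t.factorial : ℚ) := by
    rw [← hfact, ← Finset.prod_div_distrib]
    apply Finset.prod_congr rfl
    intro j hj
    have hj1 : 1 ≤ j := (Finset.mem_Icc.1 hj).1
    have hj0 : (j:ℚ) ≠ 0 := by positivity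
    rw [hxdef]
    field_simp
    ring
  rw [hQ]
  -- put everything together
  have hsum : ∑ j ∈ Finset.Icc 1 t, -(x * ((-1:ℚ)^j * t.choose j / (x + j)))
      = -(x * (t.factorial / ∏ j ∈ Finset.range (t+1), (x + j) - 1/x)) := by
    rw [Finset.sum_neg_distrib, ← Finset.mul_sum]
    congr 2
    linarith [hS]
  rw [hsum, hA]
  have hfne : (t.factorial : ℚ) ≠ 0 := by positivity
  field_simp
  ring
end

section
/- Let n, r, t be positive integers, and suppose that for each i ∈ [n] we are given t pairwise disjoint sets R_i^1, …, R_i^t ⊆ [n]\{i}, each of size exactly r. Then there exists a subset U ⊆ [n] with |U| ≥ n·(1 − 1/∏_{j=1}^{t}(1 + 1/(jr))) such that for every nonempty subset U' ⊆ U there is a vertex v ∈ U' and a color j ∈ [t] with R_v^j ∩ U' = ∅. -/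
/-!
Rank the vertices by a uniformly random permutation `π` and keep those `v` for which some
colour class `R v j` lies entirely below `v`. In any nonempty `U'` of kept vertices the
`π`-smallest one misses that colour inside `U'`. By symmetry, all of a set `W ∌ v` lies below
`v` for exactly a `1 / (#W + 1)` fraction of the permutations, so inclusion–exclusion over the
colours shows that `v` is dropped with probability `∑_J (-1)^#J / (1 + #J r)`, which equals
to `∏_{j=1}^t jr / (jr + 1)`. Some permutation keeps at least the expected number of vertices.
-/

open Finset Equiv Function
open scoped Nat

theorem sum_powerset_neg_one_pow_div {ι : Type*} [DecidableEq ι] (s : Finset ι) {c r : ℝ}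
    (hc : 0 < c) (hr : 0 ≤ r) :
    ∑ J ∈ s.powerset, (-1) ^ #J / (c + #J * r)
      = (#s)! * r ^ #s / ∏ j ∈ range (#s + 1), (c + j * r) := by
  induction s using Finset.induction_on generalizing c with
  | empty => simp
  | insert a s ha ih =>
    have hcr : 0 < c + r := by positivity
    have hshift : ∀ J ∈ s.powerset,
        (-1 : ℝ) ^ #(insert a J) / (c + #(insert a J) * r) = -((-1) ^ #J / (c + r + #J * r)) := by
      intro J hJ
      rw [card_insert_of_notMem fun h => ha (mem_powerset.1 hJ h)]
      push_cast
      ring_nf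
    rw [sum_powerset_insert ha, sum_congr rfl hshift, sum_neg_distrib, ih hc, ih hcr,
      card_insert_of_notMem ha]
    set A := ∏ j ∈ range (#s + 1), (c + j * r)
    set B := ∏ j ∈ range (#s + 1), (c + r + j * r)
    -- `key` and `key'` peel the bottom and the top factor off `∏ j < #s + 2, (c + j * r)`
    have key : ∏ j ∈ range (#s + 1 + 1), (c + j * r) = c * B := by
      rw [prod_range_succ', mul_comm]
      simp only [CharP.cast_eq_zero, zero_mul, add_zero]
      exact congrArg (c * ·) (prod_congr rfl fun j _ => by push_cast; ring)
    have key' : ∏ j ∈ range (#s + 1 + 1), (c + j * r) = A * (c + (#s + 1) * r) := by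
      rw [prod_range_succ]; push_cast; ring
    have hA : A ≠ 0 := (prod_pos fun j _ => by positivity).ne'
    have hB : B ≠ 0 := (prod_pos fun j _ => by positivity).ne'
    rw [key, Nat.factorial_succ]
    push_cast
    field_simp
    linear_combination r ^ #s * (key.symm.trans key')

theorem factorial_mul_pow_div_prod_eq (t : ℕ) {r : ℝ} (hr : 0 < r) :
    t ! * r ^ t / ∏ j ∈ range (t + 1), (1 + j * r)
      = 1 / ∏ j ∈ Icc 1 t, (1 + 1 / (j * r)) := by
  induction t with
  | zero => simp
  | succ t ih =>
    have hA : ∏ j ∈ range (t + 1), (1 + j * r) ≠ 0 := (prod_pos fun j _ => by positivity).ne'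
    have hB : ∏ j ∈ Icc 1 t, (1 + 1 / (j * r)) ≠ 0 := (prod_pos fun j _ => by positivity).ne'
    calc ((t + 1)! : ℝ) * r ^ (t + 1) / ∏ j ∈ range (t + 1 + 1), (1 + j * r)
        = (t ! * r ^ t / ∏ j ∈ range (t + 1), (1 + j * r)) * ((t + 1) * r / (1 + (t + 1) * r)) := by
          rw [prod_range_succ, Nat.factorial_succ]; push_cast; field_simp; ring_nf
      _ = _ := by
          rw [ih, prod_Icc_succ_top (by omega)]; push_cast; field_simp; ring

variable {V : Type*} [Fintype V] [LinearOrder V]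

theorem card_filter_forall_lt_mul {v : V} {W : Finset V} (hv : v ∉ W) :
    #({π : Perm V | ∀ w ∈ W, π w < π v} : Finset _) * (#W + 1) = (Fintype.card V)! := by
  set S := insert v W
  set top : V → Finset (Perm V) := fun u => ({π | ∀ w ∈ S, w ≠ u → π w < π u} : Finset _)
  have htop_v : top v = ({π : Perm V | ∀ w ∈ W, π w < π v} : Finset _) := by
    refine filter_congr fun π _ => ?_
    simp only [S, mem_insert, forall_eq_or_imp, ne_eq, not_true_eq_false, IsEmpty.forall_iff,
      true_and]
    exact forall₂_congr fun w hw => by simp [ne_of_mem_of_not_mem hw hv]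
  -- transposing the two top elements moves `π` between the fibres
  have hswap : ∀ {u v' π}, u ∈ S → π ∈ top v' → π * swap u v' ∈ top u := by
    intro u v' π hu hπ
    simp only [top, mem_filter, mem_univ, true_and, Perm.mul_apply, swap_apply_left] at hπ ⊢
    intro w hw hwu
    by_cases hwv : w = v'
    · subst hwv; simpa using hπ u hu (Ne.symm hwu)
    · rw [swap_apply_of_ne_of_ne hwu hwv]; exact hπ w hw hwv
  have hcard : ∀ u ∈ S, #(top u) = #(top v) := fun u hu =>
    card_nbij' (· * swap v u) (· * swap u v) (fun π hπ => hswap (mem_insert_self v W) hπ)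
      (fun π hπ => hswap hu hπ) (fun π _ => by simp [swap_comm, mul_assoc])
      (fun π _ => by simp [swap_comm, mul_assoc])
  have hcover : S.biUnion top = univ := by
    refine eq_univ_of_forall fun π => mem_biUnion.2 ?_
    obtain ⟨u, hu, hmax⟩ := S.exists_max_image π (insert_nonempty v W)
    exact ⟨u, hu, mem_filter.2 ⟨mem_univ _, fun w hw hwu =>
      (hmax w hw).lt_of_ne fun h => hwu (π.injective h)⟩⟩
  have hdisj : (S : Set V).PairwiseDisjoint top := by
    intro u hu u' hu' huu'
    refine disjoint_left.2 fun π hπ hπ' => ?_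
    simp only [top, mem_filter, mem_univ, true_and] at hπ hπ'
    exact (hπ u' hu' (Ne.symm huu')).not_gt (hπ' u hu huu')
  rw [← htop_v, ← card_insert_of_notMem hv, ← Fintype.card_perm, ← Finset.card_univ, ← hcover,
    card_biUnion hdisj, sum_congr rfl hcard, sum_const, smul_eq_mul, mul_comm]

variable {ι : Type*} [Fintype ι]

def colorBelowSet (R : V → ι → Finset V) (π : Perm V) : Finset V :=
  {v | ∃ j, ∀ w ∈ R v j, π w < π v}

theorem exists_inter_eq_empty_of_subset_colorBelowSet {R : V → ι → Finset V} {π : Perm V}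
    {U : Finset V} (hU : U ⊆ colorBelowSet R π) (hne : U.Nonempty) :
    ∃ v ∈ U, ∃ j, R v j ∩ U = ∅ := by
  obtain ⟨v, hv, hmin⟩ := U.exists_min_image π hne
  obtain ⟨j, hj⟩ := (mem_filter.1 (hU hv)).2
  refine ⟨v, hv, j, eq_empty_of_forall_notMem fun w hw => ?_⟩
  exact (hj w (mem_inter.1 hw).1).not_ge (hmin w (mem_inter.1 hw).2)

section RecoveryStructure

variable {R : V → ι → Finset V} {r : ℕ}

theorem card_filter_notMem_colorBelowSet (hnot : ∀ v j, v ∉ R v j) (hcard : ∀ v j, #(R v j) = r)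
    (hdisj : ∀ v, Pairwise (Disjoint on R v)) (v : V) :
    (#({π : Perm V | v ∉ colorBelowSet R π} : Finset _) : ℝ)
      = (Fintype.card V)! * ∑ J ∈ (univ : Finset ι).powerset, (-1 : ℝ) ^ #J / (1 + #J * r) := by
  set S : ι → Finset (Perm V) := fun j => ({π | ∀ w ∈ R v j, π w < π v} : Finset _)
  have hbad : ({π : Perm V | v ∉ colorBelowSet R π} : Finset _) = univ.inf fun j => (S j)ᶜ := by
    ext π; simp [colorBelowSet, S, mem_inf]
  have hinf : ∀ J : Finset ι, (#(J.inf S) : ℝ) = (Fintype.card V)! / (1 + #J * r) := by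
    intro J
    have hJ : J.inf S = ({π : Perm V | ∀ w ∈ J.biUnion (R v), π w < π v} : Finset _) := by
      ext π
      simp only [S, mem_inf, mem_filter, mem_univ, true_and, mem_biUnion, forall_exists_index,
        and_imp]
      exact ⟨fun h w j hj hw => h j hj w hw, fun h j hj w hw => h w j hj hw⟩
    have hv : v ∉ J.biUnion (R v) := by simpa using fun j _ => hnot v j
    have hcardJ : #(J.biUnion (R v)) = #J * r := by
      rw [card_biUnion fun j _ j' _ h => hdisj v h, sum_congr rfl fun j _ => hcard v j,
        sum_const, smul_eq_mul]
    have := card_filter_forall_lt_mul hv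
    rw [hcardJ] at this
    rw [eq_div_iff (by positivity), hJ, add_comm]
    exact_mod_cast this
  rw [hbad, Finset.cast_card, inclusion_exclusion_sum_inf_compl, mul_sum]
  refine sum_congr rfl fun J _ => ?_
  rw [← Finset.cast_card, hinf, zsmul_eq_mul]
  push_cast
  ring

theorem exists_perm_le_card_colorBelowSet (hnot : ∀ v j, v ∉ R v j) (hcard : ∀ v j, #(R v j) = r)
    (hdisj : ∀ v, Pairwise (Disjoint on R v)) :
    ∃ π : Perm V,
      Fintype.card V * (1 - ∑ J ∈ (univ : Finset ι).powerset, (-1 : ℝ) ^ #J / (1 + #J * r))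
        ≤ #(colorBelowSet R π) := by
  set p := ∑ J ∈ (univ : Finset ι).powerset, (-1 : ℝ) ^ #J / (1 + #J * r) with hp
  have hgood : ∀ v : V, (#({π : Perm V | v ∈ colorBelowSet R π} : Finset _) : ℝ)
      = (Fintype.card V)! * (1 - p) := by
    intro v
    have hsplit := card_filter_add_card_filter_not (s := univ) (v ∈ colorBelowSet R ·)
    rw [Finset.card_univ, Fintype.card_perm] at hsplit
    rw [mul_one_sub, hp, ← card_filter_notMem_colorBelowSet hnot hcard hdisj v, ← hsplit]
    push_cast
    ring
  have hdouble : ∑ π : Perm V, (#(colorBelowSet R π) : ℝ)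
      = ∑ v : V, (#({π : Perm V | v ∈ colorBelowSet R π} : Finset _) : ℝ) := by
    simp only [colorBelowSet, Finset.cast_card, sum_filter, mem_filter, mem_univ, true_and]
    exact sum_comm
  obtain ⟨π, -, hπ⟩ := exists_le_of_sum_le (univ_nonempty (α := Perm V))
    (f := fun _ => Fintype.card V * (1 - p)) <| le_of_eq <| by
      rw [hdouble, sum_congr rfl fun v _ => hgood v, sum_const, sum_const, Finset.card_univ,
        Finset.card_univ, Fintype.card_perm, nsmul_eq_mul, nsmul_eq_mul]
      ring
  exact ⟨π, hπ⟩

end RecoveryStructure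

theorem exists_large_color_missing_set_general (n r t : ℕ) (hr : 1 ≤ r)
    (R : Fin n → Fin t → Finset (Fin n))
    (hnot : ∀ i j, i ∉ R i j)
    (hcard : ∀ i j, (R i j).card = r)
    (hdisj : ∀ i, ∀ j j', j ≠ j' → Disjoint (R i j) (R i j')) :
    ∃ U : Finset (Fin n),
      (n : ℝ) * (1 - 1 / ∏ j ∈ Finset.Icc 1 t, (1 + 1 / ((j : ℝ) * r))) ≤ U.card ∧
      ∀ U' ⊆ U, U'.Nonempty → ∃ v ∈ U', ∃ j : Fin t, R v j ∩ U' = ∅ := by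
  obtain ⟨π, hπ⟩ := exists_perm_le_card_colorBelowSet hnot hcard fun i j j' => hdisj i j j'
  refine ⟨colorBelowSet R π, ?_, fun U' hU' hne =>
    exists_inter_eq_empty_of_subset_colorBelowSet hU' hne⟩
  rw [sum_powerset_neg_one_pow_div _ one_pos r.cast_nonneg] at hπ
  simp only [Finset.card_univ, Fintype.card_fin] at hπ
  rwa [factorial_mul_pow_div_prod_eq t (by exact_mod_cast hr)] at hπ

/-- Given a `t`-colored recovery structure on `[n]` with recovering sets of
size exactly `r`, there is a large subset `U` such that every nonempty `U' ⊆ U` contains a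
vertex missing one color among its outgoing edges within `U'`. -/
theorem exists_large_color_missing_set (n r t : ℕ) (hn : 1 ≤ n) (hr : 1 ≤ r) (ht : 1 ≤ t)
    (R : Fin n → Fin t → Finset (Fin n))
    (hnot : ∀ i j, i ∉ R i j)
    (hcard : ∀ i j, (R i j).card = r)
    (hdisj : ∀ i, ∀ j j', j ≠ j' → Disjoint (R i j) (R i j')) :
    ∃ U : Finset (Fin n),
      (n : ℝ) * (1 - 1 / ∏ j ∈ Finset.Icc 1 t, (1 + 1 / ((j : ℝ) * r))) ≤ U.card ∧
      ∀ U' ⊆ U, U'.Nonempty → ∃ v ∈ U', ∃ j : Fin t, R v j ∩ U' = ∅ :=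
  exists_large_color_missing_set_general n r t hr R hnot hcard hdisj
end

section
/- Let n, r be positive integers and t ≥ 0 an integer, and suppose that for each i ∈ [n] we are given t pairwise disjoint sets R_i^1, …, R_i^t ⊆ [n]\{i}, each of size at most r. Then for every vertex v ∈ [n] there exists a set S ⊆ [n] of size |S| ≤ r^t such that v ∈ Cl(S) and |Cl(S)| ≥ e_t·|S|, where e_t = (r^{t+1}−1)/(r^{t+1}−r^t). -/
open scoped Classical in
/-- The closure `Cl(S)` of a set `S` under a `t`-colored recovery structure `R` on `[n]`:
the smallest set `T ⊇ S` such that whenever some `i` has a color `j` with `R i j ⊆ T`,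
then `i ∈ T`. -/
noncomputable def recoveryClosure {n t : ℕ} (R : Fin n → Fin t → Finset (Fin n))
    (S : Finset (Fin n)) : Finset (Fin n) :=
  Finset.univ.filter (fun x => ∀ T : Finset (Fin n),
    S ⊆ T → (∀ i : Fin n, (∃ j : Fin t, R i j ⊆ T) → i ∈ T) → x ∈ T)

open scoped Classical

section Aux

variable {n t : ℕ} (R : Fin n → Fin t → Finset (Fin n))

lemma subset_recoveryClosure (S : Finset (Fin n)) : S ⊆ recoveryClosure R S := by
  intro x hx
  simp only [recoveryClosure, Finset.mem_filter, Finset.mem_univ, true_and]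
  intro T hST _
  exact hST hx

lemma recoveryClosure_closed (S : Finset (Fin n)) (i : Fin n)
    (h : ∃ j, R i j ⊆ recoveryClosure R S) : i ∈ recoveryClosure R S := by
  obtain ⟨j, hj⟩ := h
  simp only [recoveryClosure, Finset.mem_filter, Finset.mem_univ, true_and]
  intro T hST hT
  refine hT i ⟨j, fun x hx => ?_⟩
  have := hj hx
  simp only [recoveryClosure, Finset.mem_filter, Finset.mem_univ, true_and] at this
  exact this T hST hT

lemma recoveryClosure_min (S T : Finset (Fin n)) (hST : S ⊆ T)
    (hT : ∀ i : Fin n, (∃ j : Fin t, R i j ⊆ T) → i ∈ T) :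
    recoveryClosure R S ⊆ T := by
  intro x hx
  simp only [recoveryClosure, Finset.mem_filter, Finset.mem_univ, true_and] at hx
  exact hx T hST hT

lemma recoveryClosure_le {X Y : Finset (Fin n)} (h : X ⊆ recoveryClosure R Y) :
    recoveryClosure R X ⊆ recoveryClosure R Y :=
  recoveryClosure_min R X _ h (fun i hi => recoveryClosure_closed R Y i hi)

lemma recoveryClosure_mono {X Y : Finset (Fin n)} (h : X ⊆ Y) :
    recoveryClosure R X ⊆ recoveryClosure R Y :=
  recoveryClosure_le R (h.trans (subset_recoveryClosure R Y))

/-- Main recursive construction.  Given a vertex `u` not in the avoid set `A`,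
a context `C ⊆ A` of already-recoverable vertices, a budget `k` with
`|A \ C| + k ≤ t`, we produce a support `S` of size `≤ r^k` and a fresh set `D ∋ u`,
disjoint from `A`, contained in `Cl(S ∪ C)`, with `(∑_{i≤k} r^i)·|S| ≤ r^k·|D|`. -/
lemma rec_main (r : ℕ) (hr : 1 ≤ r)
    (hnot : ∀ i j, i ∉ R i j)
    (hcard : ∀ i j, (R i j).card ≤ r)
    (hdisj : ∀ i, ∀ j j', j ≠ j' → Disjoint (R i j) (R i j')) :
    ∀ k : ℕ, ∀ u : Fin n, ∀ C A : Finset (Fin n), C ⊆ A → u ∉ A →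
      (A \ C).card + k ≤ t →
      ∃ S D : Finset (Fin n), u ∈ D ∧ Disjoint D A ∧
        D ⊆ recoveryClosure R (S ∪ C) ∧ S.card ≤ r ^ k ∧
        (∑ i ∈ Finset.range (k + 1), r ^ i) * S.card ≤ r ^ k * D.card := by
  intro k
  induction k with
  | zero =>
    intro u C A hCA huA hstack
    refine ⟨{u}, {u}, Finset.mem_singleton_self u, ?_, ?_, by simp, by simp⟩
    · simpa [Finset.disjoint_singleton_left] using huA
    · exact (Finset.singleton_subset_iff.mpr (Finset.mem_union_left _
        (Finset.mem_singleton_self u))).trans (subset_recoveryClosure R _)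
  | succ k IH =>
    -- inner lemma: process a finite set `W` of children with budget `k` each
    have inner : ∀ W : Finset (Fin n), ∀ C A : Finset (Fin n), C ⊆ A →
        Disjoint W (A \ C) → (A \ C).card + k ≤ t →
        ∃ S D : Finset (Fin n), Disjoint D A ∧
          D ⊆ recoveryClosure R (S ∪ C) ∧ W ⊆ D ∪ C ∧
          S.card ≤ W.card * r ^ k ∧
          (∑ i ∈ Finset.range (k + 1), r ^ i) * S.card ≤ r ^ k * D.card := by
      intro W
      induction W using Finset.induction_on with
      | empty =>
        intro C A _ _ _
        exact ⟨∅, ∅, Finset.disjoint_empty_left A, by simp, by simp, by simp, by simp⟩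
      | @insert w W hwW IHW =>
        intro C A hCA hWdis hstack
        by_cases hwC : w ∈ C
        · obtain ⟨S1, D1, h1dis, h1cl, h1cov, h1card, h1cnt⟩ :=
            IHW C A hCA (Finset.disjoint_of_subset_left (Finset.subset_insert w W) hWdis)
              hstack
          refine ⟨S1, D1, h1dis, h1cl, ?_, ?_, h1cnt⟩
          · exact Finset.insert_subset (Finset.mem_union_right _ hwC) h1cov
          · calc S1.card ≤ W.card * r ^ k := h1card
              _ ≤ (insert w W).card * r ^ k := by
                  exact Nat.mul_le_mul_right _ (Finset.card_le_card (Finset.subset_insert w W))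
        · -- w gets its own recursive call
          have hwA : w ∉ A := by
            intro hw
            have : w ∈ A \ C := Finset.mem_sdiff.mpr ⟨hw, hwC⟩
            exact (Finset.disjoint_left.mp hWdis (Finset.mem_insert_self w W)) this
          obtain ⟨S2, D2, hw2, h2dis, h2cl, h2card, h2cnt⟩ := IH w C A hCA hwA hstack
          -- process the rest with enlarged context
          have hsub : (A ∪ D2) \ (C ∪ D2) ⊆ A \ C := by
            intro x hx
            rw [Finset.mem_sdiff] at hx ⊢
            rcases Finset.mem_union.mp hx.1 with h | h
            · exact ⟨h, fun hc => hx.2 (Finset.mem_union_left _ hc)⟩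
            · exact absurd (Finset.mem_union_right _ h) hx.2
          obtain ⟨S1, D1, h1dis, h1cl, h1cov, h1card, h1cnt⟩ :=
            IHW (C ∪ D2) (A ∪ D2)
              (Finset.union_subset_union hCA (Finset.Subset.refl D2))
              (Finset.disjoint_of_subset_right hsub
                (Finset.disjoint_of_subset_left (Finset.subset_insert w W) hWdis))
              (le_trans (Nat.add_le_add_right (Finset.card_le_card hsub) k) hstack)
          have hD1A : Disjoint D1 A :=
            Finset.disjoint_of_subset_right Finset.subset_union_left h1dis
          have hD1D2 : Disjoint D1 D2 :=
            Finset.disjoint_of_subset_right Finset.subset_union_right h1dis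
          -- closure facts
          have hclD2 : D2 ⊆ recoveryClosure R ((S1 ∪ S2) ∪ C) :=
            h2cl.trans (recoveryClosure_mono R (by
              intro x hx
              rcases Finset.mem_union.mp hx with h | h
              · exact Finset.mem_union_left _ (Finset.mem_union_right _ h)
              · exact Finset.mem_union_right _ h))
          have hclD1 : D1 ⊆ recoveryClosure R ((S1 ∪ S2) ∪ C) := by
            refine h1cl.trans (recoveryClosure_le R ?_)
            intro x hx
            rcases Finset.mem_union.mp hx with h | h
            · exact subset_recoveryClosure R _
                (Finset.mem_union_left _ (Finset.mem_union_left _ h))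
            · rcases Finset.mem_union.mp h with h' | h'
              · exact subset_recoveryClosure R _ (Finset.mem_union_right _ h')
              · exact hclD2 h'
          refine ⟨S1 ∪ S2, D1 ∪ D2, ?_, ?_, ?_, ?_, ?_⟩
          · exact Finset.disjoint_union_left.mpr ⟨hD1A, h2dis⟩
          · exact Finset.union_subset hclD1 hclD2
          · -- coverage
            refine Finset.insert_subset ?_ ?_
            · exact Finset.mem_union_left _ (Finset.mem_union_right _ hw2)
            · intro x hx
              rcases Finset.mem_union.mp (h1cov hx) with h | h
              · exact Finset.mem_union_left _ (Finset.mem_union_left _ h)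
              · rcases Finset.mem_union.mp h with h' | h'
                · exact Finset.mem_union_right _ h'
                · exact Finset.mem_union_left _ (Finset.mem_union_right _ h')
          · calc (S1 ∪ S2).card ≤ S1.card + S2.card := Finset.card_union_le _ _
              _ ≤ W.card * r ^ k + r ^ k := Nat.add_le_add h1card h2card
              _ = (W.card + 1) * r ^ k := by ring
              _ = (insert w W).card * r ^ k := by
                  rw [Finset.card_insert_of_notMem hwW]
          · have hcardD : (D1 ∪ D2).card = D1.card + D2.card :=
              Finset.card_union_of_disjoint hD1D2
            calc (∑ i ∈ Finset.range (k + 1), r ^ i) * (S1 ∪ S2).card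
                ≤ (∑ i ∈ Finset.range (k + 1), r ^ i) * (S1.card + S2.card) :=
                  Nat.mul_le_mul_left _ (Finset.card_union_le _ _)
              _ = (∑ i ∈ Finset.range (k + 1), r ^ i) * S1.card
                  + (∑ i ∈ Finset.range (k + 1), r ^ i) * S2.card := by ring
              _ ≤ r ^ k * D1.card + r ^ k * D2.card := Nat.add_le_add h1cnt h2cnt
              _ = r ^ k * (D1 ∪ D2).card := by rw [hcardD]; ring
    -- outer step for budget k+1
    intro u C A hCA huA hstack
    -- find a color avoiding the stack A \ C
    have hcolor : ∃ j : Fin t, Disjoint (R u j) (A \ C) := by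
      by_contra hcon
      push_neg at hcon
      have hex : ∀ j : Fin t, ∃ a, a ∈ R u j ∩ (A \ C) := by
        intro j
        rcases Finset.not_disjoint_iff.mp (hcon j) with ⟨a, ha1, ha2⟩
        exact ⟨a, Finset.mem_inter.mpr ⟨ha1, ha2⟩⟩
      choose f hf using hex
      have hinj : Function.Injective f := by
        intro j j' hjj'
        by_contra hne
        have h1 : f j ∈ R u j := (Finset.mem_inter.mp (hf j)).1
        have h2 : f j' ∈ R u j' := (Finset.mem_inter.mp (hf j')).1
        rw [hjj'] at h1
        exact (Finset.disjoint_left.mp (hdisj u j j' hne) h1) h2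
      have hmap : ∀ j, f j ∈ A \ C := fun j => (Finset.mem_inter.mp (hf j)).2
      have : t ≤ (A \ C).card := by
        classical
        have := Finset.card_le_card_of_injOn (s := (Finset.univ : Finset (Fin t)))
          f (fun j _ => hmap j) (Set.injOn_of_injective hinj)
        simpa using this
      omega
    obtain ⟨j, hj⟩ := hcolor
    have huC : u ∉ C := fun h => huA (hCA h)
    have hsd : (insert u A) \ C = insert u (A \ C) := by
      ext x
      simp only [Finset.mem_sdiff, Finset.mem_insert]
      constructor
      · rintro ⟨h1 | h1, h2⟩
        · exact Or.inl h1
        · exact Or.inr ⟨h1, h2⟩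
      · rintro (h1 | ⟨h1, h2⟩)
        · exact ⟨Or.inl h1, h1 ▸ huC⟩
        · exact ⟨Or.inr h1, h2⟩
    have huAC : u ∉ A \ C := fun h => huA (Finset.mem_sdiff.mp h).1
    obtain ⟨S, D, hDdis, hDcl, hcov, hScard, hcnt⟩ :=
      inner (R u j) C (insert u A) (hCA.trans (Finset.subset_insert u A))
        (by rw [hsd]
            exact Finset.disjoint_insert_right.mpr ⟨hnot u j, hj⟩)
        (by rw [hsd, Finset.card_insert_of_notMem huAC]; omega)
    have huD : u ∈ recoveryClosure R (S ∪ C) := by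
      refine recoveryClosure_closed R _ u ⟨j, ?_⟩
      intro x hx
      rcases Finset.mem_union.mp (hcov hx) with h | h
      · exact hDcl h
      · exact subset_recoveryClosure R _ (Finset.mem_union_right _ h)
    have huDn : u ∉ D := fun h => Finset.disjoint_left.mp hDdis h (Finset.mem_insert_self u A)
    have hSc : S.card ≤ r ^ (k + 1) := by
      calc S.card ≤ (R u j).card * r ^ k := hScard
        _ ≤ r * r ^ k := Nat.mul_le_mul_right _ (hcard u j)
        _ = r ^ (k + 1) := by ring
    refine ⟨S, insert u D, Finset.mem_insert_self u D, ?_, ?_, hSc, ?_⟩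
    · refine Finset.disjoint_insert_left.mpr ⟨huA, ?_⟩
      exact Finset.disjoint_of_subset_right (Finset.subset_insert u A) hDdis
    · exact Finset.insert_subset huD hDcl
    · -- counting
      have hgeom : ∑ i ∈ Finset.range (k + 2), r ^ i
          = 1 + r * ∑ i ∈ Finset.range (k + 1), r ^ i := by
        rw [Finset.sum_range_succ' (fun i => r ^ i), Finset.mul_sum]
        simp [pow_succ, Nat.add_comm, Nat.mul_comm]
      rw [Finset.card_insert_of_notMem huDn, hgeom]
      have h1 : (1 + r * ∑ i ∈ Finset.range (k + 1), r ^ i) * S.card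
          = S.card + r * ((∑ i ∈ Finset.range (k + 1), r ^ i) * S.card) := by ring
      rw [h1]
      have h2 : r * ((∑ i ∈ Finset.range (k + 1), r ^ i) * S.card)
          ≤ r * (r ^ k * D.card) := Nat.mul_le_mul_left _ hcnt
      calc S.card + r * ((∑ i ∈ Finset.range (k + 1), r ^ i) * S.card)
          ≤ r ^ (k + 1) + r * (r ^ k * D.card) := Nat.add_le_add hSc h2
        _ = r ^ (k + 1) * (D.card + 1) := by ring

end Aux

/-- For every vertex `v` there is a set `S` with `|S| ≤ r^t`, `v ∈ Cl(S)`,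
and expansion ratio `|Cl(S)|/|S| ≥ e_t = (r^{t+1}−1)/(r^{t+1}−r^t)`. -/
theorem exists_small_set_large_closure (n r t : ℕ) (hn : 1 ≤ n) (hr : 1 ≤ r)
    (R : Fin n → Fin t → Finset (Fin n))
    (hnot : ∀ i j, i ∉ R i j)
    (hcard : ∀ i j, (R i j).card ≤ r)
    (hdisj : ∀ i, ∀ j j', j ≠ j' → Disjoint (R i j) (R i j')) :
    ∀ v : Fin n, ∃ S : Finset (Fin n),
      S.card ≤ r ^ t ∧ v ∈ recoveryClosure R S ∧
      (((r : ℚ) ^ (t + 1) - 1) / ((r : ℚ) ^ (t + 1) - (r : ℚ) ^ t)) * S.card ≤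
        ((recoveryClosure R S).card : ℚ) := by
  intro v
  obtain ⟨S, D, hvD, hdis, hcl, hScard, hcnt⟩ :=
    rec_main R r hr hnot hcard hdisj t v ∅ ∅ (Finset.Subset.refl _)
      (Finset.notMem_empty v) (by simp)
  rw [Finset.union_empty] at hcl
  refine ⟨S, hScard, hcl hvD, ?_⟩
  have hDle : D.card ≤ (recoveryClosure R S).card := Finset.card_le_card hcl
  have hkey : (∑ i ∈ Finset.range (t + 1), r ^ i) * S.card
      ≤ r ^ t * (recoveryClosure R S).card :=
    le_trans hcnt (Nat.mul_le_mul_left _ hDle)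
  rcases eq_or_lt_of_le hr with h1 | h2
  · -- r = 1 : the coefficient is 0/0 = 0
    have : (r : ℚ) = 1 := by exact_mod_cast h1.symm
    rw [this]
    simp only [one_pow, sub_self, div_zero, zero_mul]
    positivity
  · -- r ≥ 2
    have hrQ : (1 : ℚ) < (r : ℚ) := by exact_mod_cast h2
    have hr1 : (r : ℚ) - 1 ≠ 0 := by linarith
    have hrt : (0 : ℚ) < (r : ℚ) ^ t := by positivity
    have hnum : (r : ℚ) ^ (t + 1) - 1
        = (∑ i ∈ Finset.range (t + 1), (r : ℚ) ^ i) * ((r : ℚ) - 1) := by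
      rw [geom_sum_mul]
    have hden : (r : ℚ) ^ (t + 1) - (r : ℚ) ^ t = (r : ℚ) ^ t * ((r : ℚ) - 1) := by
      ring
    rw [hnum, hden, mul_div_mul_right _ _ hr1]
    rw [div_mul_eq_mul_div, div_le_iff₀ hrt]
    have : ((∑ i ∈ Finset.range (t + 1), r ^ i : ℕ) : ℚ) * (S.card : ℚ)
        ≤ ((r ^ t * (recoveryClosure R S).card : ℕ) : ℚ) := by
      rw [← Nat.cast_mul]
      exact_mod_cast hkey
    push_cast at this ⊢
    linarith
end

section
/- Let q be a prime power, r ≥ 1 an integer, δ ∈ (0, (q−1)/q) a real number, and ε > 0. Then for all sufficiently large n divisible by r+1 there exists a q-ary linear code C ⊆ F_q^n of minimum distance at least δn and dimension at least n·(r/(r+1) − min_{0<s≤1}{ (1/(r+1))·log_q b(s) − δ·log_q s } − ε), such that every coordinate of C has a recovering set of size at most r, where b(s) = q^{−1}((1 + (q−1)s)^{r+1} + (q−1)(1−s)^{r+1}). -/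
/-!
Split the `n = (r + 1) t` coordinates into `t` blocks of size `r + 1` and let `V` be the code
whose blocks all sum to zero. Any subcode of `V` recovers a coordinate from the other `r`
coordinates of its block, and `dim V = r t`. Inside `V` a Gilbert–Varshamov greedy argument
extends a code of dimension `k` and minimum weight `> D` by one more vector as long as
`(q - 1) q^k · #{v ∈ V | wt v ≤ D} < |V|`. Light vectors are counted by Markov's inequality
against the weight enumerator, which factors over the blocks:
`#{v ∈ V | wt v ≤ D} · s^D ≤ ∑_{v ∈ V} s^{wt v} = b(s)^t`, `b(s)` being the weight enumerator
of the length `r + 1` parity-check code. With `D = ⌊δn⌋` and `s` close to optimal, taking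
`log_q` turns the greedy condition into the rate bound.
-/

open Finset Real

theorem card_filter_le_mul_pow_le_sum_pow {α : Type*} (S : Finset α) (g : α → ℕ) (D : ℕ)
    {s : ℝ} (hs0 : 0 ≤ s) (hs1 : s ≤ 1) :
    #{x ∈ S | g x ≤ D} * s ^ D ≤ ∑ x ∈ S, s ^ g x := by
  calc #{x ∈ S | g x ≤ D} * s ^ D = ∑ x ∈ S with g x ≤ D, s ^ D := by
        rw [sum_const, nsmul_eq_mul]
    _ ≤ ∑ x ∈ S with g x ≤ D, s ^ g x :=
        sum_le_sum fun x hx => pow_le_pow_of_le_one hs0 hs1 (mem_filter.mp hx).2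
    _ ≤ ∑ x ∈ S, s ^ g x :=
        sum_le_sum_of_subset_of_nonneg (filter_subset _ _) fun _ _ _ => by positivity

theorem pow_hammingNorm_eq_prod {ι γ : Type*} [Fintype ι] [Zero γ] [DecidableEq γ] (s : ℝ)
    (v : ι → γ) : s ^ hammingNorm v = ∏ i, if v i = 0 then 1 else s := by
  rw [prod_ite, prod_const_one, one_mul, prod_const, hammingNorm]

noncomputable def parityWeightEnumerator (q : ℝ) (r : ℕ) (s : ℝ) : ℝ :=
  1 / q * ((1 + (q - 1) * s) ^ (r + 1) + (q - 1) * (1 - s) ^ (r + 1))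

theorem parityWeightEnumerator_pos {q : ℝ} (hq : 1 ≤ q) (r : ℕ) {s : ℝ} (hs0 : 0 ≤ s)
    (hs1 : s ≤ 1) : 0 < parityWeightEnumerator q r s :=
  mul_pos (by positivity) (add_pos_of_pos_of_nonneg (pow_pos (by nlinarith) _)
    (mul_nonneg (by linarith) (pow_nonneg (by linarith) _)))

section WeightEnumerator

variable {F : Type*} [Field F] [Fintype F] [DecidableEq F]

theorem sum_pow_hammingNorm_of_sum_eq (s : ℝ) (ℓ : ℕ) (a : F) :
    ∑ c : Fin ℓ → F with ∑ i, c i = a, s ^ hammingNorm c =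
      ((1 + (Fintype.card F - 1) * s) ^ ℓ - (1 - s) ^ ℓ) / Fintype.card F +
        if a = 0 then (1 - s) ^ ℓ else 0 := by
  have hq : (Fintype.card F : ℝ) ≠ 0 := by positivity
  induction ℓ generalizing a with
  | zero => by_cases ha : a = 0 <;> simp [ha, eq_comm (a := (0 : F)), hammingNorm]
  | succ ℓ ih =>
    have hsplit : ∑ c : Fin (ℓ + 1) → F with ∑ i, c i = a, s ^ hammingNorm c =
        ∑ x : F, (if x = 0 then 1 else s) *
          ∑ c : Fin ℓ → F with ∑ i, c i = a - x, s ^ hammingNorm c := by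
      rw [sum_filter, ← (Fin.consEquiv fun _ => F).sum_comp, Fintype.sum_prod_type]
      refine sum_congr rfl fun x _ => ?_
      simp only [sum_filter, mul_sum, Fin.consEquiv, Equiv.coe_fn_mk, Fin.sum_cons,
        pow_hammingNorm_eq_prod, Fin.prod_univ_succ, Fin.cons_zero, Fin.cons_succ,
        eq_sub_iff_add_eq', mul_ite, mul_zero]
    have hweights : ∑ x : F, (if x = 0 then 1 else s) = 1 + (Fintype.card F - 1) * s := by
      rw [sum_ite, filter_eq', filter_ne', if_pos (mem_univ _), sum_singleton, sum_const,
        card_erase_of_mem (mem_univ _), card_univ, nsmul_eq_mul, Nat.cast_sub Fintype.card_pos,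
        Nat.cast_one]
    rw [hsplit]
    simp only [ih, sub_eq_zero, mul_add, sum_add_distrib, ← sum_mul, hweights, mul_ite, mul_zero,
      sum_ite_eq, mem_univ, if_true]
    split_ifs <;> field_simp <;> ring

end WeightEnumerator

section BlockParityCode

variable {F : Type*} [Field F] {β ι : Type*} {r : ℕ}

variable (F) in
def blockParityCode (e : β × Fin (r + 1) ≃ ι) : Submodule F (ι → F) :=
  LinearMap.ker (LinearMap.pi fun b => ∑ j, LinearMap.proj (e (b, j)))

theorem mem_blockParityCode {e : β × Fin (r + 1) ≃ ι} {v : ι → F} :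
    v ∈ blockParityCode F e ↔ ∀ b, ∑ j, v (e (b, j)) = 0 := by
  simp [blockParityCode, funext_iff]

instance [DecidableEq F] [Fintype β] (e : β × Fin (r + 1) ≃ ι) :
    DecidablePred (· ∈ blockParityCode F e) :=
  fun _ => decidable_of_iff _ mem_blockParityCode.symm

theorem finrank_blockParityCode [Fintype β] [Fintype ι] (e : β × Fin (r + 1) ≃ ι) :
    Module.finrank F (blockParityCode F e) = r * Fintype.card β := by
  set φ : (ι → F) →ₗ[F] β → F := LinearMap.pi fun b => ∑ j, LinearMap.proj (e (b, j))
  have hφ : Function.Surjective φ := fun y =>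
    ⟨fun i => if (e.symm i).2 = 0 then y (e.symm i).1 else 0, funext fun b => by simp [φ]⟩
  have := φ.finrank_range_add_finrank_ker
  rw [LinearMap.range_eq_top.mpr hφ, finrank_top, Module.finrank_fintype_fun_eq_card,
    Module.finrank_fintype_fun_eq_card, ← Fintype.card_congr e, Fintype.card_prod,
    Fintype.card_fin] at this
  change _ + Module.finrank F (blockParityCode F e) = _ at this
  linarith

theorem exists_recoveringSet_of_le_blockParityCode {e : β × Fin (r + 1) ≃ ι}
    {C : Submodule F (ι → F)} (hC : C ≤ blockParityCode F e) (i : ι) :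
    ∃ R : Finset ι, i ∉ R ∧ #R ≤ r ∧
      ∀ x ∈ C, ∀ y ∈ C, (∀ j ∈ R, x j = y j) → x i = y i := by
  obtain ⟨⟨b, j⟩, rfl⟩ := e.surjective i
  refine ⟨(univ.erase j).map ((Function.Embedding.sectR b _).trans e.toEmbedding), ?_, ?_, ?_⟩
  · simp
  · simp
  · intro x hx y hy hxy
    have hsum : ∑ j, (x (e (b, j)) - y (e (b, j))) = 0 :=
      mem_blockParityCode.mp (hC (C.sub_mem hx hy)) b
    rw [sum_eq_single_of_mem j (mem_univ j) fun j' _ hj' =>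
      sub_eq_zero.mpr (hxy (e (b, j')) (by simp [hj']))] at hsum
    exact sub_eq_zero.mp hsum

theorem sum_pow_hammingNorm_blockParityCode [Fintype F] [DecidableEq F] [Fintype β]
    [Fintype ι] [DecidableEq ι] (e : β × Fin (r + 1) ≃ ι) (s : ℝ) :
    ∑ v with v ∈ blockParityCode F e, s ^ hammingNorm v =
      parityWeightEnumerator (Fintype.card F) r s ^ Fintype.card β := by
  classical
  have hblock : ∑ c : Fin (r + 1) → F with ∑ j, c j = 0, s ^ hammingNorm c =
      parityWeightEnumerator (Fintype.card F) r s := by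
    rw [sum_pow_hammingNorm_of_sum_eq, if_pos rfl, parityWeightEnumerator]
    field_simp
    ring
  let E : (ι → F) ≃ (β → Fin (r + 1) → F) :=
    (e.arrowCongr (Equiv.refl F)).symm.trans (Equiv.curry _ _ _)
  rw [← hblock, ← card_univ (α := β), ← prod_const]
  simp only [sum_filter]
  rw [Fintype.prod_sum]
  refine Fintype.sum_equiv E _ _ fun v => ?_
  simp only [prod_ite_zero, mem_blockParityCode, pow_hammingNorm_eq_prod, ← e.prod_comp,
    Fintype.prod_prod_type, mem_univ, true_implies]
  rfl

theorem card_blockParityCode_hammingNorm_le_mul_pow_le [Fintype F] [DecidableEq F] [Fintype β]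
    [Fintype ι] [DecidableEq ι] (e : β × Fin (r + 1) ≃ ι) (D : ℕ) {s : ℝ} (hs0 : 0 ≤ s)
    (hs1 : s ≤ 1) :
    #{v | v ∈ blockParityCode F e ∧ hammingNorm v ≤ D} * s ^ D ≤
      parityWeightEnumerator (Fintype.card F) r s ^ Fintype.card β := by
  rw [← sum_pow_hammingNorm_blockParityCode e s, ← filter_filter]
  exact card_filter_le_mul_pow_le_sum_pow _ _ D hs0 hs1

end BlockParityCode

section GilbertVarshamov

variable {F : Type*} [Field F] [Fintype F] [DecidableEq F]
  {ι : Type*} [Fintype ι] [DecidableEq ι]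

theorem exists_sup_span_singleton_lt_hammingNorm {V C : Submodule F (ι → F)}
    [DecidablePred (· ∈ V)] (hCV : C ≤ V) {D : ℕ} (hC : ∀ x ∈ C, x ≠ 0 → D < hammingNorm x)
    (hcard : (Fintype.card F - 1) * Fintype.card F ^ Module.finrank F C *
      #{v | v ∈ V ∧ hammingNorm v ≤ D} < Fintype.card F ^ Module.finrank F V) :
    ∃ v ∈ V, v ∉ C ∧ ∀ x ∈ C ⊔ F ∙ v, x ≠ 0 → D < hammingNorm x := by
  classical
  set B : Finset (ι → F) := {v | v ∈ V ∧ hammingNorm v ≤ D}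
  -- `v` is good unless some `c + α • v` (`c ∈ C`, `α ≠ 0`) is light, i.e. `v = α⁻¹ • (x - c)`.
  set bad := (({c | c ∈ C} : Finset (ι → F)) ×ˢ (univ.erase 0) ×ˢ B).image
    fun p : (ι → F) × F × (ι → F) => p.2.1⁻¹ • (p.2.2 - p.1)
  have mem_bad :
      ∀ c ∈ C, ∀ α : F, α ≠ 0 → ∀ x ∈ V, hammingNorm x ≤ D → α⁻¹ • (x - c) ∈ bad :=
    fun c hc α hα x hxV hx => mem_image.mpr ⟨(c, α, x), by simp [B, hc, hα, hxV, hx], rfl⟩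
  have hbad : #bad < #{v | v ∈ V} := by
    calc #bad ≤ Fintype.card F ^ Module.finrank F C * ((Fintype.card F - 1) * #B) := by
          refine card_image_le.trans_eq ?_
          rw [card_product, card_product, card_erase_of_mem (mem_univ _), card_univ,
            ← Fintype.card_subtype, ← Module.card_eq_pow_finrank (V := C)]
      _ < Fintype.card F ^ Module.finrank F V := by linarith
      _ = #{v | v ∈ V} := by
          rw [← Fintype.card_subtype, ← Module.card_eq_pow_finrank (V := V)]
  obtain ⟨v, hvV, hv⟩ := exists_mem_notMem_of_card_lt_card hbad
  replace hvV : v ∈ V := by simpa using hvV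
  refine ⟨v, hvV, fun hvC => hv ?_, ?_⟩
  · simpa using mem_bad (-v) (neg_mem hvC) 1 one_ne_zero 0 V.zero_mem (by simp)
  rintro x hx hx0
  obtain ⟨c, hc, _, hz, rfl⟩ := Submodule.mem_sup.mp hx
  obtain ⟨α, rfl⟩ := Submodule.mem_span_singleton.mp hz
  by_cases hα : α = 0
  · simp only [hα, zero_smul, add_zero] at hx0 ⊢
    exact hC c hc hx0
  by_contra! hlight
  refine hv ?_
  simpa [smul_smul, hα] using
    mem_bad c hc α hα _ (V.add_mem (hCV hc) (V.smul_mem α hvV)) hlight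

theorem exists_le_finrank_eq_lt_hammingNorm (V : Submodule F (ι → F)) [DecidablePred (· ∈ V)]
    (D k : ℕ)
    (hk : ∀ i < k, (Fintype.card F - 1) * Fintype.card F ^ i *
      #{v | v ∈ V ∧ hammingNorm v ≤ D} < Fintype.card F ^ Module.finrank F V) :
    ∃ C ≤ V, Module.finrank F C = k ∧ ∀ x ∈ C, x ≠ 0 → D < hammingNorm x := by
  induction k with
  | zero =>
    exact ⟨⊥, bot_le, finrank_bot F _, fun x hx hx0 => (hx0 ((Submodule.mem_bot F).mp hx)).elim⟩
  | succ k ih =>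
    obtain ⟨C, hCV, rfl, hC⟩ := ih fun i hi => hk i (by omega)
    obtain ⟨v, hvV, hvC, hv⟩ :=
      exists_sup_span_singleton_lt_hammingNorm hCV hC (hk _ (Nat.lt_succ_self _))
    exact ⟨C ⊔ F ∙ v, sup_le hCV ((Submodule.span_singleton_le_iff_mem _ _).mpr hvV),
      Submodule.finrank_sup_span_singleton hvC, hv⟩

end GilbertVarshamov

theorem mul_pow_mul_lt_pow_of_logb_lt {q : ℕ} (hq : 1 < q) {s b : ℝ} (hs : 0 < s) (hb : 0 < b)
    {A D i t R : ℕ} (hA : A * s ^ D ≤ b ^ t)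
    (hlog : logb q (q - 1) + i + t * logb q b - D * logb q s < R) :
    (q - 1) * q ^ i * A < q ^ R := by
  have hq1 : (1 : ℝ) < q := by exact_mod_cast hq
  have hq0 : (0 : ℝ) < q - 1 := by linarith
  have hbound : ((q : ℝ) - 1) * q ^ i * b ^ t / s ^ D < q ^ R := by
    rw [← logb_lt_logb_iff hq1 (by positivity) (by positivity), logb_div (by positivity)
      (by positivity), logb_mul (by positivity) (by positivity), logb_mul hq0.ne' (by positivity)]
    simpa [logb_pow, logb_self_eq_one hq1] using hlog
  have hA' : (A : ℝ) ≤ b ^ t / s ^ D := (le_div_iff₀ (by positivity)).mpr hA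
  rw [← Nat.cast_lt (α := ℝ)]
  push_cast [Nat.cast_sub hq.le]
  calc ((q : ℝ) - 1) * q ^ i * A ≤ ((q : ℝ) - 1) * q ^ i * (b ^ t / s ^ D) := by gcongr
    _ < q ^ R := by rwa [← mul_div_assoc]

theorem add_logb_lt_of_lt_rate {q b s δ ε m r t n i D : ℝ} (hq : 1 < q) (hs0 : 0 < s)
    (hs1 : s ≤ 1) (hr : 0 ≤ r) (ht : 0 ≤ t) (hn : n = (r + 1) * t)
    (hfs : 1 / (r + 1) * logb q b - δ * logb q s < m + ε / 2)
    (hi : i < n * (r / (r + 1) - m - ε)) (hD : D ≤ δ * n) (hq1 : logb q (q - 1) ≤ ε / 2 * n) :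
    logb q (q - 1) + i + t * logb q b - D * logb q s < r * t := by
  have hlogs : logb q s ≤ 0 := logb_nonpos hq hs0.le hs1
  have hb : t * logb q b - δ * n * logb q s ≤ n * (m + ε / 2) := by
    have := mul_le_mul_of_nonneg_left hfs.le (by positivity : 0 ≤ (r + 1) * t)
    rw [hn]
    field_simp at this ⊢
    linarith
  have hs : δ * n * logb q s ≤ D * logb q s := mul_le_mul_of_nonpos_right hD hlogs
  have hrate : n * (r / (r + 1)) = r * t := by rw [hn]; field_simp
  linarith

theorem gv_bound_lrc_asymptotic_general {F : Type*} [Field F] [Fintype F] [DecidableEq F]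
    (q r : ℕ) (hq : Fintype.card F = q)
    (δ : ℝ) (hδ0 : 0 < δ) (ε : ℝ) (hε : 0 < ε) :
    ∃ N : ℕ, ∀ n : ℕ, N ≤ n → (r + 1) ∣ n →
      ∃ C : Submodule F (Fin n → F),
        (n : ℝ) * ((r : ℝ) / ((r : ℝ) + 1) -
            sInf ((fun s : ℝ => (1 / ((r : ℝ) + 1)) *
                Real.logb q ((1 / (q : ℝ)) * ((1 + ((q : ℝ) - 1) * s) ^ (r + 1) +
                  ((q : ℝ) - 1) * (1 - s) ^ (r + 1))) -
                δ * Real.logb q s) '' Set.Ioc (0 : ℝ) 1) - ε) ≤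
          (Module.finrank F C : ℝ) ∧
        (∀ x ∈ C, ∀ y ∈ C, x ≠ y → δ * n ≤ (hammingDist x y : ℝ)) ∧
        (∀ i : Fin n, ∃ R : Finset (Fin n), i ∉ R ∧ R.card ≤ r ∧
          ∀ x ∈ C, ∀ y ∈ C, (∀ j ∈ R, x j = y j) → x i = y i) := by
  subst hq
  have hq : 1 < Fintype.card F := Fintype.one_lt_card
  have hq1 : (1 : ℝ) < Fintype.card F := by exact_mod_cast hq
  set f : ℝ → ℝ := fun s => 1 / ((r : ℝ) + 1) *
    logb (Fintype.card F) (parityWeightEnumerator (Fintype.card F) r s) -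
      δ * logb (Fintype.card F) s
  obtain ⟨_, ⟨s, ⟨hs0, hs1⟩, rfl⟩, hfs⟩ :=
    Real.lt_sInf_add_pos ((Set.nonempty_Ioc.mpr one_pos).image f) (half_pos hε)
  obtain ⟨N, hN⟩ := Filter.eventually_atTop.mp <|
    (tendsto_natCast_atTop_atTop.const_mul_atTop (half_pos hε)).eventually_ge_atTop
      (logb (Fintype.card F) (Fintype.card F - 1))
  refine ⟨N, fun n hn ⟨t, ht⟩ => ?_⟩
  let e : Fin t × Fin (r + 1) ≃ Fin n := finProdFinEquiv.trans (finCongr (by rw [ht, mul_comm]))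
  obtain ⟨C, hCV, hCk, hCd⟩ :=
    exists_le_finrank_eq_lt_hammingNorm (blockParityCode F e) ⌊δ * n⌋₊
      ⌈(n : ℝ) * (r / (r + 1) - sInf (f '' Set.Ioc 0 1) - ε)⌉₊ fun i hi =>
        mul_pow_mul_lt_pow_of_logb_lt hq hs0 (parityWeightEnumerator_pos hq1.le r hs0.le hs1)
          (card_blockParityCode_hammingNorm_le_mul_pow_le e _ hs0.le hs1) <| by
          rw [finrank_blockParityCode, Fintype.card_fin, Nat.cast_mul]
          exact add_logb_lt_of_lt_rate hq1 hs0 hs1 r.cast_nonneg t.cast_nonneg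
            (by rw [ht]; push_cast; ring) hfs (Nat.lt_ceil.mp hi) (Nat.floor_le (by positivity))
            (hN n hn)
  refine ⟨C, by rw [hCk]; exact Nat.le_ceil _, fun x hx y hy hxy => ?_,
    exists_recoveringSet_of_le_blockParityCode hCV⟩
  rw [hammingDist_eq_hammingNorm, neg_add_eq_sub]
  exact (Nat.lt_floor_add_one _).le.trans
    (by exact_mod_cast hCd _ (C.sub_mem hy hx) (sub_ne_zero.mpr hxy.symm))

/-- Asymptotic Gilbert–Varshamov-type bound for `q`-ary LRC codes with
locality `r`: for every `δ ∈ (0, (q−1)/q)` and `ε > 0`, for all sufficiently large `n`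
divisible by `r+1` there are linear LRC codes of relative distance `δ` and rate at least
`r/(r+1) − min_{0<s≤1}{(1/(r+1))·log_q b(s) − δ·log_q s} − ε`. -/
theorem gv_bound_lrc_asymptotic {F : Type*} [Field F] [Fintype F] [DecidableEq F]
    (q r : ℕ) (hq : Fintype.card F = q) (hr : 1 ≤ r)
    (δ : ℝ) (hδ0 : 0 < δ) (hδ1 : δ < ((q : ℝ) - 1) / q) (ε : ℝ) (hε : 0 < ε) :
    ∃ N : ℕ, ∀ n : ℕ, N ≤ n → (r + 1) ∣ n →
      ∃ C : Submodule F (Fin n → F),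
        (n : ℝ) * ((r : ℝ) / ((r : ℝ) + 1) -
            sInf ((fun s : ℝ => (1 / ((r : ℝ) + 1)) *
                Real.logb q ((1 / (q : ℝ)) * ((1 + ((q : ℝ) - 1) * s) ^ (r + 1) +
                  ((q : ℝ) - 1) * (1 - s) ^ (r + 1))) -
                δ * Real.logb q s) '' Set.Ioc (0 : ℝ) 1) - ε) ≤
          (Module.finrank F C : ℝ) ∧
        (∀ x ∈ C, ∀ y ∈ C, x ≠ y → δ * n ≤ (hammingDist x y : ℝ)) ∧
        (∀ i : Fin n, ∃ R : Finset (Fin n), i ∉ R ∧ R.card ≤ r ∧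
          ∀ x ∈ C, ∀ y ∈ C, (∀ j ∈ R, x j = y j) → x i = y i) :=
  gv_bound_lrc_asymptotic_general q r hq δ hδ0 ε hε
end

section
/- Let q ≥ 2, r ≥ 1, and let b(s) = q^{−1}((1 + (q−1)s)^{r+1} + (q−1)(1−s)^{r+1}). For any positive integers d and n with 1 ≤ d ≤ n and d/n ≤ (q−1)/q, the function s ↦ b(s)^{n/(r+1)} · s^{−d} on (0, ∞) attains a unique global minimum, and the minimizing value of s lies in the interval (0, 1]. Moreover, the function f(s) = s·b'(s)/((r+1)·b(s)) is strictly increasing on (0, ∞). -/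
/-!
Expanding the binomials, `b(s) = ∑ₖ cₖ sᵏ` with `cₖ = C(r+1, k)((q−1)ᵏ + (q−1)(−1)ᵏ)/q ≥ 0`,
`c₀ = 1` and `c₂ > 0`. Then `g(s) = s b'(s)/b(s)` is the mean of `k` under the weights `cₖ sᵏ`;
it increases strictly with `s`, since the weights tilt towards larger `k` and at least two
exponents carry positive weight (a Chebyshev-type double-sum argument). As `g(0) = 0` and
`g(1) = (r+1)(q−1)/q ≥ (r+1)d/n`, some `s₀ ∈ (0, 1]` has `g(s₀) = (r+1)d/n`. The logarithm of
`b(s)^{n/(r+1)} s^{−d}` has derivative `(n g(s)/(r+1) − d)/s`, which changes sign from negative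
to positive exactly at `s₀`, so `s₀` is the unique minimiser.
-/

open Finset Set

noncomputable def bPoly (q r : ℕ) (s : ℝ) : ℝ :=
  (1 / (q : ℝ)) * ((1 + ((q : ℝ) - 1) * s) ^ (r + 1) + ((q : ℝ) - 1) * (1 - s) ^ (r + 1))

theorem pow_mul_pow_lt_pow_mul_pow {s t : ℝ} (hs : 0 < s) (hst : s < t) {j k : ℕ}
    (hjk : j < k) : s ^ k * t ^ j < t ^ k * s ^ j := by
  obtain ⟨m, rfl⟩ := Nat.exists_eq_add_of_lt hjk
  have hst_pow : s ^ (m + 1) < t ^ (m + 1) := pow_lt_pow_left₀ hst hs.le m.succ_ne_zero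
  have hst_pos : 0 < (s * t) ^ j := pow_pos (mul_pos hs (hs.trans hst)) j
  calc s ^ (j + m + 1) * t ^ j = (s * t) ^ j * s ^ (m + 1) := by ring
    _ < (s * t) ^ j * t ^ (m + 1) := mul_lt_mul_of_pos_left hst_pow hst_pos
    _ = t ^ (j + m + 1) * s ^ j := by ring

section PowerSums

variable (c : ℕ → ℝ) (N : ℕ)

theorem two_mul_sub_eq_sum_sum (s t : ℝ) :
    2 * ((∑ k ∈ range N, k * c k * t ^ k) * (∑ k ∈ range N, c k * s ^ k) -
        (∑ k ∈ range N, k * c k * s ^ k) * (∑ k ∈ range N, c k * t ^ k)) =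
      ∑ k ∈ range N, ∑ j ∈ range N,
        ((k : ℝ) - j) * (c k * c j * (t ^ k * s ^ j - s ^ k * t ^ j)) := by
  have hswap :
      ∑ k ∈ range N, ∑ j ∈ range N, (j : ℝ) * (c k * c j * (t ^ k * s ^ j - s ^ k * t ^ j)) =
        -∑ k ∈ range N, ∑ j ∈ range N, (k : ℝ) * (c k * c j * (t ^ k * s ^ j - s ^ k * t ^ j)) := by
    rw [sum_comm, ← sum_neg_distrib]
    refine sum_congr rfl fun k _ => ?_
    rw [← sum_neg_distrib]
    exact sum_congr rfl fun j _ => by ring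
  have hdiff : (∑ k ∈ range N, k * c k * t ^ k) * (∑ k ∈ range N, c k * s ^ k) -
        (∑ k ∈ range N, k * c k * s ^ k) * (∑ k ∈ range N, c k * t ^ k) =
      ∑ k ∈ range N, ∑ j ∈ range N, (k : ℝ) * (c k * c j * (t ^ k * s ^ j - s ^ k * t ^ j)) := by
    simp only [sum_mul_sum, ← sum_sub_distrib]
    exact sum_congr rfl fun k _ => sum_congr rfl fun j _ => by ring
  simp only [sub_mul, sum_sub_distrib, hdiff, hswap]
  ring

variable {c N}

theorem sum_mul_pow_mul_sum_lt (hc : ∀ k, 0 ≤ c k) {i j : ℕ} (hij : i < j) (hjN : j < N)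
    (hci : 0 < c i) (hcj : 0 < c j) {s t : ℝ} (hs : 0 < s) (hst : s < t) :
    (∑ k ∈ range N, k * c k * s ^ k) * (∑ k ∈ range N, c k * t ^ k) <
      (∑ k ∈ range N, k * c k * t ^ k) * (∑ k ∈ range N, c k * s ^ k) := by
  have hterm : ∀ k l : ℕ, 0 ≤ ((k : ℝ) - l) * (c k * c l * (t ^ k * s ^ l - s ^ k * t ^ l)) := by
    intro k l
    have hckl := mul_nonneg (hc k) (hc l)
    rcases lt_trichotomy l k with h | rfl | h
    · have hlk : (l : ℝ) < k := by exact_mod_cast h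
      have := pow_mul_pow_lt_pow_mul_pow hs hst h
      exact mul_nonneg (by linarith) (mul_nonneg hckl (by linarith))
    · simp
    · have hkl : (k : ℝ) < l := by exact_mod_cast h
      have := pow_mul_pow_lt_pow_mul_pow hs hst h
      exact mul_nonneg_of_nonpos_of_nonpos (by linarith)
        (mul_nonpos_of_nonneg_of_nonpos hckl (by linarith))
  have hpos : 0 < ∑ k ∈ range N, ∑ l ∈ range N,
      ((k : ℝ) - l) * (c k * c l * (t ^ k * s ^ l - s ^ k * t ^ l)) := by
    rw [← sum_product']
    refine sum_pos' (fun p _ => hterm p.1 p.2) ⟨(j, i), by simp [hjN, hij.trans hjN], ?_⟩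
    have hji : (i : ℝ) < j := by exact_mod_cast hij
    exact mul_pos (by linarith)
      (mul_pos (mul_pos hcj hci) (sub_pos.2 (pow_mul_pow_lt_pow_mul_pow hs hst hij)))
  linarith [two_mul_sub_eq_sum_sum c N s t]

theorem strictMonoOn_sum_div_sum (hc : ∀ k, 0 ≤ c k) {i j : ℕ} (hij : i < j) (hjN : j < N)
    (hci : 0 < c i) (hcj : 0 < c j) :
    StrictMonoOn (fun s : ℝ => (∑ k ∈ range N, k * c k * s ^ k) / ∑ k ∈ range N, c k * s ^ k)
      (Ioi 0) := by
  have hsum_pos : ∀ s : ℝ, 0 < s → 0 < ∑ k ∈ range N, c k * s ^ k := fun s hs =>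
    sum_pos' (fun k _ => mul_nonneg (hc k) (pow_nonneg hs.le k))
      ⟨i, mem_range.2 (hij.trans hjN), mul_pos hci (pow_pos hs i)⟩
  intro s hs t ht hst
  rw [div_lt_div_iff₀ (hsum_pos s hs) (hsum_pos t ht)]
  exact sum_mul_pow_mul_sum_lt hc hij hjN hci hcj hs hst

variable (c N)

theorem mul_deriv_sum_mul_pow (s : ℝ) :
    s * deriv (fun x : ℝ => ∑ k ∈ range N, c k * x ^ k) s = ∑ k ∈ range N, k * c k * s ^ k := by
  rw [(HasDerivAt.fun_sum fun k _ => (hasDerivAt_pow k s).const_mul (c k)).deriv, mul_sum]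
  refine sum_congr rfl fun k _ => ?_
  cases k with
  | zero => simp
  | succ k => simp only [Nat.add_sub_cancel, pow_succ]; push_cast; ring

end PowerSums

theorem lt_of_hasDerivAt_neg_of_pos {L L' : ℝ → ℝ} {a s₀ x : ℝ} (has₀ : a < s₀)
    (hL : ∀ y ∈ Ioi a, HasDerivAt L (L' y) y) (hneg : ∀ y ∈ Ioo a s₀, L' y < 0)
    (hpos : ∀ y ∈ Ioi s₀, 0 < L' y) (hx : a < x) (hne : x ≠ s₀) : L s₀ < L x := by
  have hcont : ∀ y z, a < y → ContinuousOn L (Icc y z) := fun y z hy w hw =>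
    (hL w (hy.trans_le hw.1)).continuousAt.continuousWithinAt
  rcases hne.lt_or_gt with h | h
  · refine strictAntiOn_of_hasDerivWithinAt_neg (f' := L') (convex_Icc x s₀) (hcont x s₀ hx)
      (fun y hy => ?_) (fun y hy => ?_) ⟨le_rfl, h.le⟩ ⟨h.le, le_rfl⟩ h
    all_goals rw [interior_Icc] at hy
    · exact (hL y (hx.trans hy.1)).hasDerivWithinAt
    · exact hneg y ⟨hx.trans hy.1, hy.2⟩
  · refine strictMonoOn_of_hasDerivWithinAt_pos (f' := L') (convex_Icc s₀ x) (hcont s₀ x has₀)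
      (fun y hy => ?_) (fun y hy => ?_) ⟨le_rfl, h.le⟩ ⟨h.le, le_rfl⟩ h
    all_goals rw [interior_Icc] at hy
    · exact (hL y (has₀.trans hy.1)).hasDerivWithinAt
    · exact hpos y hy.1

theorem rpow_mul_rpow_neg_lt_of_strictMonoOn {b : ℝ → ℝ} {α β s₀ s : ℝ}
    (hb : ∀ x ∈ Ioi (0 : ℝ), 0 < b x) (hb_diff : ∀ x ∈ Ioi (0 : ℝ), DifferentiableAt ℝ b x)
    (hmono : StrictMonoOn (fun x => x * deriv b x / b x) (Ioi 0)) (hα : 0 < α) (hs₀ : 0 < s₀)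
    (hβ : α * (s₀ * deriv b s₀ / b s₀) = β) (hs : 0 < s) (hne : s ≠ s₀) :
    b s₀ ^ α * s₀ ^ (-β) < b s ^ α * s ^ (-β) := by
  subst hβ
  set g : ℝ → ℝ := fun x => x * deriv b x / b x
  have hexp : ∀ x ∈ Ioi (0 : ℝ),
      b x ^ α * x ^ (-(α * g s₀)) = Real.exp (α * Real.log (b x) - α * g s₀ * Real.log x) := by
    intro x hx
    rw [Real.rpow_def_of_pos (hb x hx), Real.rpow_def_of_pos hx, ← Real.exp_add]
    ring_nf
  have hderiv : ∀ x ∈ Ioi (0 : ℝ), HasDerivAt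
      (fun y => α * Real.log (b y) - α * g s₀ * Real.log y) (α * (g x - g s₀) / x) x := by
    intro x hx
    have hbx := (hb x hx).ne'
    have hx' : x ≠ 0 := (mem_Ioi.1 hx).ne'
    refine ((((hb_diff x hx).hasDerivAt.log hbx).const_mul α).sub
      ((Real.hasDerivAt_log hx').const_mul (α * g s₀))).congr_deriv ?_
    simp only [g]
    field_simp
  rw [hexp s₀ hs₀, hexp s hs, Real.exp_lt_exp]
  refine lt_of_hasDerivAt_neg_of_pos hs₀ hderiv (fun x hx => ?_) (fun x hx => ?_) hs hne
  · exact div_neg_of_neg_of_pos (mul_neg_of_pos_of_neg hα (sub_neg.2 (hmono hx.1 hs₀ hx.2))) hx.1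
  · exact div_pos (mul_pos hα (sub_pos.2 (hmono hs₀ (hs₀.trans hx) hx))) (hs₀.trans hx)

section bPoly

variable {q r : ℕ}

noncomputable def bCoeff (q r k : ℕ) : ℝ :=
  (r + 1).choose k * (((q : ℝ) - 1) ^ k + ((q : ℝ) - 1) * (-1) ^ k) / q

theorem bPoly_eq_sum (q r : ℕ) (s : ℝ) :
    bPoly q r s = ∑ k ∈ range (r + 2), bCoeff q r k * s ^ k := by
  rw [bPoly, add_comm 1, sub_eq_add_neg (1 : ℝ) s, add_comm 1 (-s), add_pow, add_pow, mul_sum,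
    ← sum_add_distrib, mul_sum]
  refine sum_congr rfl fun k _ => ?_
  rw [bCoeff, mul_pow, neg_pow]
  ring

theorem bCoeff_nonneg (hq : 1 ≤ q) (r k : ℕ) : 0 ≤ bCoeff q r k := by
  have hq' : (q : ℝ) - 1 = (q - 1 : ℕ) := by push_cast [Nat.cast_sub hq]; ring
  refine div_nonneg (mul_nonneg (Nat.cast_nonneg _) ?_) (Nat.cast_nonneg q)
  rw [hq']
  rcases neg_one_pow_eq_or ℝ k with h | h
  · rw [h]; positivity
  · have hk : k ≠ 0 := by rintro rfl; norm_num at h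
    have := Nat.le_self_pow hk (q - 1)
    rw [h, mul_neg_one, ← sub_eq_add_neg, sub_nonneg]
    exact_mod_cast this

theorem bCoeff_zero (hq : q ≠ 0) (r : ℕ) : bCoeff q r 0 = 1 := by
  simp [bCoeff, hq]

theorem bCoeff_two_pos (hq : 2 ≤ q) (hr : 1 ≤ r) : 0 < bCoeff q r 2 := by
  have hq' : (1 : ℝ) ≤ q - 1 := by
    have : (2 : ℝ) ≤ q := by exact_mod_cast hq
    linarith
  have hchoose : 0 < (r + 1).choose 2 := Nat.choose_pos (by omega)
  unfold bCoeff
  positivity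

theorem one_le_bPoly (hq : 1 ≤ q) (r : ℕ) {s : ℝ} (hs : 0 ≤ s) : 1 ≤ bPoly q r s := by
  rw [bPoly_eq_sum]
  calc (1 : ℝ) = bCoeff q r 0 * s ^ 0 := by rw [bCoeff_zero (by omega), pow_zero, one_mul]
    _ ≤ ∑ k ∈ range (r + 2), bCoeff q r k * s ^ k :=
      single_le_sum (fun k _ => mul_nonneg (bCoeff_nonneg hq r k) (pow_nonneg hs k)) (by simp)

theorem mul_deriv_bPoly (q r : ℕ) (s : ℝ) :
    s * deriv (bPoly q r) s = ∑ k ∈ range (r + 2), k * bCoeff q r k * s ^ k := by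
  rw [show bPoly q r = _ from funext (bPoly_eq_sum q r), mul_deriv_sum_mul_pow]

theorem hasDerivAt_bPoly (q r : ℕ) (s : ℝ) :
    HasDerivAt (bPoly q r) (1 / (q : ℝ) * ((r + 1) * (1 + ((q : ℝ) - 1) * s) ^ r * ((q : ℝ) - 1)
      - ((q : ℝ) - 1) * ((r + 1) * (1 - s) ^ r))) s := by
  have h₁ : HasDerivAt (fun x : ℝ => 1 + ((q : ℝ) - 1) * x) ((q : ℝ) - 1) s := by
    simpa using ((hasDerivAt_id s).const_mul ((q : ℝ) - 1)).const_add 1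
  have h₂ : HasDerivAt (fun x : ℝ => 1 - x) (-1) s := by
    simpa using (hasDerivAt_id s).const_sub 1
  refine (((h₁.pow (r + 1)).add ((h₂.pow (r + 1)).const_mul ((q : ℝ) - 1))).const_mul
    (1 / (q : ℝ))).congr_deriv ?_
  push_cast
  ring

theorem bPoly_one (hq : q ≠ 0) (r : ℕ) : bPoly q r 1 = (q : ℝ) ^ r := by
  have : (q : ℝ) ≠ 0 := Nat.cast_ne_zero.2 hq
  rw [bPoly, mul_one, add_sub_cancel, sub_self, zero_pow r.succ_ne_zero, mul_zero, add_zero,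
    pow_succ]
  field_simp

theorem deriv_bPoly_one (hr : 1 ≤ r) :
    deriv (bPoly q r) 1 = (r + 1) * ((q : ℝ) - 1) * (q : ℝ) ^ r / q := by
  rw [(hasDerivAt_bPoly q r 1).deriv, sub_self, zero_pow (by omega)]
  ring

theorem continuousOn_mul_deriv_div_bPoly (hq : 1 ≤ q) (r : ℕ) :
    ContinuousOn (fun s => s * deriv (bPoly q r) s / bPoly q r s) (Ici 0) := by
  simp_rw [mul_deriv_bPoly]
  refine ContinuousOn.div (by fun_prop) ?_ fun s hs => (one_pos.trans_le (one_le_bPoly hq r hs)).ne'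
  unfold bPoly
  fun_prop

theorem strictMonoOn_mul_deriv_div_bPoly (hq : 2 ≤ q) (hr : 1 ≤ r) :
    StrictMonoOn (fun s => s * deriv (bPoly q r) s / bPoly q r s) (Ioi 0) := by
  simp_rw [mul_deriv_bPoly, bPoly_eq_sum]
  exact strictMonoOn_sum_div_sum (bCoeff_nonneg (by omega) r) two_pos (by omega)
    (by rw [bCoeff_zero (by omega)]; exact one_pos) (bCoeff_two_pos hq hr)

end bPoly

/-- For `1 ≤ d ≤ n` with `d/n ≤ (q−1)/q`, the function
`s ↦ b(s)^{n/(r+1)}·s^{−d}` on `(0, ∞)` attains a unique global minimum, and the minimizer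
lies in `(0, 1]`. Moreover `f(s) = s·b'(s)/((r+1)·b(s))` is strictly increasing on `(0, ∞)`. -/
theorem unique_minimum_gv_function (q r d n : ℕ)
    (hq : 2 ≤ q) (hr : 1 ≤ r) (hd : 1 ≤ d) (hdn : d ≤ n)
    (hδ : (d : ℝ) / n ≤ ((q : ℝ) - 1) / q) :
    (∃ s₀ : ℝ, s₀ ∈ Set.Ioc (0 : ℝ) 1 ∧
      (∀ s ∈ Set.Ioi (0 : ℝ),
        bPoly q r s₀ ^ ((n : ℝ) / ((r : ℝ) + 1)) * s₀ ^ (-(d : ℝ)) ≤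
          bPoly q r s ^ ((n : ℝ) / ((r : ℝ) + 1)) * s ^ (-(d : ℝ))) ∧
      (∀ s ∈ Set.Ioi (0 : ℝ),
        (∀ u ∈ Set.Ioi (0 : ℝ),
          bPoly q r s ^ ((n : ℝ) / ((r : ℝ) + 1)) * s ^ (-(d : ℝ)) ≤
            bPoly q r u ^ ((n : ℝ) / ((r : ℝ) + 1)) * u ^ (-(d : ℝ))) → s = s₀)) ∧
    StrictMonoOn (fun s : ℝ => s * deriv (bPoly q r) s / (((r : ℝ) + 1) * bPoly q r s))
      (Set.Ioi (0 : ℝ)) := by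
  have hn : (0 : ℝ) < n := by exact_mod_cast hd.trans hdn
  have hr₁ : (0 : ℝ) < r + 1 := by positivity
  have hq₀ : q ≠ 0 := by omega
  obtain ⟨s₀, hs₀, hcrit⟩ : ∃ s₀ ∈ Ioc (0 : ℝ) 1,
      s₀ * deriv (bPoly q r) s₀ / bPoly q r s₀ = (r + 1) * (d / n) := by
    refine intermediate_value_Ioc zero_le_one
      ((continuousOn_mul_deriv_div_bPoly (by omega) r).mono Icc_subset_Ici_self) ⟨?_, ?_⟩
    · simpa using mul_pos hr₁ (div_pos (by exact_mod_cast hd) hn)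
    · have hq' : (q : ℝ) ≠ 0 := Nat.cast_ne_zero.2 hq₀
      calc (r + 1) * (d / n : ℝ) ≤ (r + 1) * (((q : ℝ) - 1) / q) := by gcongr
        _ = 1 * deriv (bPoly q r) 1 / bPoly q r 1 := by
          rw [bPoly_one hq₀, deriv_bPoly_one hr]; field_simp
  have hmin : ∀ s ∈ Ioi (0 : ℝ), s ≠ s₀ →
      bPoly q r s₀ ^ ((n : ℝ) / ((r : ℝ) + 1)) * s₀ ^ (-(d : ℝ)) <
        bPoly q r s ^ ((n : ℝ) / ((r : ℝ) + 1)) * s ^ (-(d : ℝ)) := fun s hs hne =>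
    rpow_mul_rpow_neg_lt_of_strictMonoOn
      (fun x hx => one_pos.trans_le (one_le_bPoly (by omega) r (le_of_lt hx)))
      (fun x _ => (hasDerivAt_bPoly q r x).differentiableAt)
      (strictMonoOn_mul_deriv_div_bPoly hq hr) (div_pos hn hr₁) hs₀.1
      (by rw [hcrit]; field_simp) hs hne
  refine ⟨⟨s₀, hs₀, fun s hs => ?_, fun s hs hle => ?_⟩, fun s hs t ht hst => ?_⟩
  · rcases eq_or_ne s s₀ with rfl | hne
    exacts [le_rfl, (hmin s hs hne).le]
  · by_contra hne
    exact (hle s₀ hs₀.1).not_gt (hmin s hs hne)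
  · simp only [mul_comm ((r : ℝ) + 1), ← div_div]
    exact div_lt_div_of_pos_right (strictMonoOn_mul_deriv_div_bPoly hq hr hs ht hst) hr₁
end

section
/- Let A_1, …, A_s be subsets of [m] satisfying Hall's condition: for every I ⊆ [s], |⋃_{i∈I} A_i| ≥ |I|. Let q be a prime power with q − 1 > s. Then there exist vectors x_1, …, x_s ∈ F_q^m that are linearly independent over F_q and such that for each i, the coordinate (x_i)_a is nonzero for every a ∈ A_i and zero for every a ∉ A_i. -/
open Matrix

/-- Auxiliary: over a field with at least 3 elements, for any off-diagonal pattern `S`,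
there is a matrix with nonzero determinant whose support is exactly the diagonal union `S`. -/
lemma exists_matrix_support_pattern {F : Type*} [Field F] [Fintype F]
    (hF : 3 ≤ Fintype.card F) (n : ℕ) (S : Finset (Fin n × Fin n))
    (hS : ∀ p ∈ S, p.1 ≠ p.2) :
    ∃ M : Matrix (Fin n) (Fin n) F, M.det ≠ 0 ∧
      ∀ i j, M i j ≠ 0 ↔ (i = j ∨ (i, j) ∈ S) := by
  classical
  induction S using Finset.induction_on with
  | empty =>
    refine ⟨1, by simp, fun i j => ?_⟩
    simp [Matrix.one_apply]
  | @insert p S hpS ih =>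
    obtain ⟨i, j⟩ := p
    have hij : i ≠ j := hS (i, j) (Finset.mem_insert_self _ _)
    obtain ⟨M, hdet, hsupp⟩ := ih (fun p hp => hS p (Finset.mem_insert_of_mem hp))
    set d : F := (M.updateRow i (Pi.single j 1)).det with hd
    -- choose t ≠ 0 with M.det + t * d ≠ 0
    have : ∃ t : F, t ≠ 0 ∧ M.det + t * d ≠ 0 := by
      by_cases hd0 : d = 0
      · exact ⟨1, one_ne_zero, by simpa [hd0] using hdet⟩
      · have h2 : ({0, -M.det * d⁻¹} : Finset F).card ≤ 2 :=
          (Finset.card_insert_le _ _).trans (by simp)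
        have hne : (Finset.univ \ ({0, -M.det * d⁻¹} : Finset F)).Nonempty := by
          rw [← Finset.card_pos, Finset.card_sdiff_of_subset (Finset.subset_univ _), Finset.card_univ]
          omega
        obtain ⟨t, ht⟩ := hne
        simp only [Finset.mem_sdiff, Finset.mem_insert, Finset.mem_singleton, not_or] at ht
        refine ⟨t, ht.2.1, fun h => ht.2.2 ?_⟩
        field_simp
        linear_combination h
    obtain ⟨t, ht0, htd⟩ := this
    refine ⟨M.updateRow i (M i + t • (Pi.single j 1 : Fin n → F)), ?_, ?_⟩
    · rw [Matrix.det_updateRow_add, Matrix.det_updateRow_smul, Matrix.updateRow_eq_self]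
      exact htd
    · intro i' j'
      rcases eq_or_ne i' i with rfl | hi'
      · rw [Matrix.updateRow_self]
        rcases eq_or_ne j' j with rfl | hj'
        · have hMij : M i' j' = 0 := by
            by_contra h
            rcases (hsupp i' j').mp h with h | h
            · exact hij h
            · exact hpS h
          simp [hMij, ht0, hij]
        · simp only [Pi.add_apply, Pi.smul_apply, Pi.single_eq_of_ne hj', smul_zero, add_zero]
          rw [hsupp i' j']
          simp only [Finset.mem_insert, Prod.mk.injEq]
          tauto
      · rw [Matrix.updateRow_ne hi']
        rw [hsupp i' j']
        constructor
        · rintro (h | h)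
          · exact Or.inl h
          · exact Or.inr (Finset.mem_insert_of_mem h)
        · rintro (h | h)
          · exact Or.inl h
          · rcases Finset.mem_insert.mp h with h | h
            · exact absurd (Prod.ext_iff.mp h).1 hi'
            · exact Or.inr h

/-- If `A₁, …, A_s ⊆ [m]` satisfy Hall's condition and `q − 1 > s`, then
there are linearly independent vectors `x₁, …, x_s ∈ F_q^m` with `x_i` supported exactly on
`A_i` (nonzero on `A_i`, zero off `A_i`). -/
theorem hall_family_linearly_independent_vectors {F : Type*} [Field F] [Fintype F]
    (q m s : ℕ) (hq : Fintype.card F = q) (hqs : s < q - 1)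
    (A : Fin s → Finset (Fin m))
    (hall : ∀ I : Finset (Fin s), I.card ≤ (I.biUnion A).card) :
    ∃ x : Fin s → (Fin m → F), LinearIndependent F x ∧
      ∀ i : Fin s, ∀ a : Fin m, (a ∈ A i → x i a ≠ 0) ∧ (a ∉ A i → x i a = 0) := by
  classical
  rcases Nat.eq_zero_or_pos s with rfl | hs
  · exact ⟨fun _ => 0, linearIndependent_empty_type, fun i => i.elim0⟩
  have hF : 3 ≤ Fintype.card F := by omega
  obtain ⟨f, hfinj, hfA⟩ := (Finset.all_card_le_biUnion_card_iff_exists_injective A).mp hall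
  set S : Finset (Fin s × Fin s) :=
    Finset.univ.filter (fun p => f p.2 ∈ A p.1 ∧ p.1 ≠ p.2) with hSdef
  obtain ⟨M, hdet, hsupp⟩ := exists_matrix_support_pattern (F := F) hF s S
    (fun p hp => (Finset.mem_filter.mp hp).2.2)
  have hM : ∀ i j, M i j ≠ 0 ↔ f j ∈ A i := by
    intro i j
    rw [hsupp i j]
    constructor
    · rintro (rfl | h)
      · exact hfA i
      · exact (Finset.mem_filter.mp h).2.1
    · intro h
      rcases eq_or_ne i j with rfl | hij
      · exact Or.inl rfl
      · exact Or.inr (Finset.mem_filter.mpr ⟨Finset.mem_univ _, h, hij⟩)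
  refine ⟨fun i a => if a ∈ A i then (if hj : ∃ j, f j = a then M i hj.choose else 1) else 0,
    ?_, ?_⟩
  · rw [Fintype.linearIndependent_iff]
    intro g hg
    have key : ∀ j : Fin s, ∑ i, g i * M i j = 0 := by
      intro j
      have := congrFun hg (f j)
      simp only [Finset.sum_apply, Pi.smul_apply, smul_eq_mul, Pi.zero_apply] at this
      rw [← this]
      apply Finset.sum_congr rfl
      intro i _
      congr 1
      by_cases hA : f j ∈ A i
      · have hex : ∃ j', f j' = f j := ⟨j, rfl⟩
        have : hex.choose = j := hfinj hex.choose_spec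
        simp [hA, hex, this]
      · have : M i j = 0 := by
          by_contra h
          exact hA ((hM i j).mp h)
        simp [hA, this]
    have : M.vecMul g = 0 := by
      funext j
      simpa [Matrix.vecMul, dotProduct] using key j
    exact funext_iff.mp (Matrix.eq_zero_of_vecMul_eq_zero hdet this)
  · intro i a
    constructor
    · intro ha
      by_cases hj : ∃ j, f j = a
      · have : f hj.choose ∈ A i := by rw [hj.choose_spec]; exact ha
        simp only [ha, if_true, hj, dif_pos]
        exact (hM i hj.choose).mpr this
      · simp [ha, hj]
    · intro ha
      simp [ha]
end

section
/- Let n, k, p, r, t be positive integers with p = nt/(r+1) and k ≤ n − p, and let δ, γ be reals with 0 < δ, 0 < γ. Suppose N : [n] → (subsets of [p]) assigns to each i a set N_i with |N_i| = t, and suppose the expansion property holds: for every I ⊆ [n] with |I| ≤ δn, |⋃_{i∈I} N_i| ≥ γt|I|. Suppose further that δ(1 − tγ) ≤ 1 − t/(r+1) − k/n. Define S_i = N_i ∪ {p+1, …, n−k} ⊆ [n−k] for each i ∈ [n]. Then for every I ⊆ [n] with |I| ≤ δn, the family {S_i : i ∈ I} satisfies Hall's condition: for every J ⊆ I, |⋃_{i∈J}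 S_i| ≥ |J|. -/
/-- Given a left-regular expanding neighborhood map `N : [n] → 2^{[p]}`
and `δ(1 − tγ) ≤ 1 − t/(r+1) − k/n`, the family `S_i = N_i ∪ {p+1, …, n−k}`
(viewed inside `[n−k]`, coordinates `0, …, n−k−1`) restricted to any index set of size at
most `δn` satisfies Hall's condition. -/
theorem expander_sets_hall_condition (n k p r t : ℕ)
    (hn : 0 < n) (hk : 0 < k) (hp : 0 < p) (hr : 0 < r) (ht : 0 < t)
    (hpn : p * (r + 1) = n * t) (hkp : k + p ≤ n)
    (δ γ : ℝ) (hδ : 0 < δ) (hγ : 0 < γ)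
    (N : Fin n → Finset (Fin p)) (hdeg : ∀ i, (N i).card = t)
    (hexp : ∀ I : Finset (Fin n), (I.card : ℝ) ≤ δ * n →
      γ * t * I.card ≤ ((I.biUnion N).card : ℝ))
    (hrate : δ * (1 - t * γ) ≤ 1 - (t : ℝ) / ((r : ℝ) + 1) - (k : ℝ) / n) :
    ∀ I : Finset (Fin n), (I.card : ℝ) ≤ δ * n →
      ∀ J ⊆ I, J.card ≤
        (J.biUnion (fun i => (N i).image (Fin.val) ∪ Finset.Ico p (n - k))).card := by
  intro I hI J hJI
  rcases J.eq_empty_or_nonempty with h | ⟨j0, hj0⟩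
  · simp [h]
  have hJcard : (J.card : ℝ) ≤ δ * n := by
    refine le_trans ?_ hI
    exact_mod_cast Nat.cast_le.mpr (Finset.card_le_card hJI)
  have hexpJ := hexp J hJcard
  have hU : J.biUnion (fun i => (N i).image Fin.val ∪ Finset.Ico p (n-k))
      = (J.biUnion (fun i => (N i).image Fin.val)) ∪ Finset.Ico p (n-k) := by
    ext x
    simp only [Finset.mem_biUnion, Finset.mem_union]
    constructor
    · rintro ⟨i, hi, h | h⟩
      · exact Or.inl ⟨i, hi, h⟩
      · exact Or.inr h
    · rintro (⟨i, hi, h⟩ | h)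
      · exact ⟨i, hi, Or.inl h⟩
      · exact ⟨j0, hj0, Or.inr h⟩
  rw [hU]
  have hdisj : Disjoint (J.biUnion (fun i => (N i).image Fin.val)) (Finset.Ico p (n-k)) := by
    rw [Finset.disjoint_left]
    intro x hx hx'
    simp only [Finset.mem_biUnion, Finset.mem_image] at hx
    obtain ⟨i, _, y, _, rfl⟩ := hx
    exact absurd (Finset.mem_Ico.mp hx').1 (not_le.mpr y.isLt)
  rw [Finset.card_union_of_disjoint hdisj]
  have himg : (J.biUnion (fun i => (N i).image Fin.val)).card = (J.biUnion N).card := by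
    rw [← Finset.biUnion_image]
    exact Finset.card_image_of_injective _ Fin.val_injective
  rw [himg, Nat.card_Ico]
  -- now a numeric inequality
  have hcast : ((n - k - p : ℕ) : ℝ) = (n : ℝ) - k - p := by
    have h1 : n - k - p = n - (k + p) := by omega
    rw [h1, Nat.cast_sub hkp]
    push_cast; ring
  have hkpn : ((k : ℝ) + p) ≤ n := by exact_mod_cast hkp
  have hn' : (0 : ℝ) < n := by exact_mod_cast hn
  have hfin : (J.card : ℝ) ≤ ((J.biUnion N).card : ℝ) + ((n - k - p : ℕ) : ℝ) := by
    rw [hcast]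
    by_cases hc : 1 ≤ γ * t
    · have h1 : (J.card : ℝ) ≤ γ * t * J.card := by
        nlinarith [Nat.cast_nonneg (α := ℝ) J.card]
      linarith [hexpJ]
    · push_neg at hc
      have hr1 : (0 : ℝ) < (r : ℝ) + 1 := by positivity
      have hpeq : (p : ℝ) * ((r : ℝ) + 1) = n * t := by exact_mod_cast hpn
      have h2 : (n : ℝ) * ((t : ℝ) / ((r : ℝ) + 1)) = p := by
        field_simp
        linarith [hpeq]
      have h3 : (k : ℝ) / n * n = k := div_mul_cancel₀ _ (ne_of_gt hn')
      have key : δ * (1 - t * γ) * n ≤ (n : ℝ) - p - k := by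
        have := mul_le_mul_of_nonneg_right hrate (le_of_lt hn')
        nlinarith [this]
      have hprod : (0 : ℝ) ≤ (δ * n - J.card) * (1 - γ * t) :=
        mul_nonneg (by linarith [hJcard]) (by linarith)
      nlinarith [hexpJ, key, hprod]
  exact_mod_cast hfin
end
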